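/- arXiv:2002.09241 — 6 statements merged into one kernel-verified Lean document; each statement's English description precedes it below -/
import Mathlib

section
/- Let S be a semibrick in an exact category E, S an element of S, Y ∈ Filt(S), and φ : S → Y a morphism. Then φ is zero, or φ is an inflation whose cokernel Y/S lies in Filt(S). -/
open CategoryTheory CategoryTheory.Limits

universe v u

/-- A Quillen exact structure on an additive category `E`: a class of
kernel-cokernel pairs ("conflations"), closed under isomorphisms, containing
the trivial conflations, with inflations and deflations closed under
composition, pushouts of inflations and pullbacks of deflations existing and
again inflations/deflations. -/
structure ExactStruct (E : Type u) [Category.{v} E] [HasZeroMorphisms E] where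
  conf : ∀ ⦃X Y Z : E⦄, (X ⟶ Y) → (Y ⟶ Z) → Prop
  conf_comp : ∀ ⦃X Y Z : E⦄ {f : X ⟶ Y} {g : Y ⟶ Z}, conf f g → f ≫ g = 0
  conf_isKernel : ∀ ⦃X Y Z : E⦄ {f : X ⟶ Y} {g : Y ⟶ Z} (h : conf f g),
    Nonempty (IsLimit (KernelFork.ofι f (conf_comp h)))
  conf_isCokernel : ∀ ⦃X Y Z : E⦄ {f : X ⟶ Y} {g : Y ⟶ Z} (h : conf f g),
    Nonempty (IsColimit (CokernelCofork.ofπ g (conf_comp h)))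
  conf_iso : ∀ ⦃X Y Z X' Y' Z' : E⦄ {f : X ⟶ Y} {g : Y ⟶ Z} {f' : X' ⟶ Y'} {g' : Y' ⟶ Z'}
    (α : X ≅ X') (β : Y ≅ Y') (γ : Z ≅ Z'),
    conf f g → f ≫ β.hom = α.hom ≫ f' → g ≫ γ.hom = β.hom ≫ g' → conf f' g'
  conf_id_left : ∀ (X Z : E), IsZero Z → conf (𝟙 X) (0 : X ⟶ Z)
  conf_id_right : ∀ (Z X : E), IsZero Z → conf (0 : Z ⟶ X) (𝟙 X)
  infl_comp : ∀ ⦃X Y W : E⦄ {f : X ⟶ Y} {f' : Y ⟶ W},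
    (∃ (Z : E) (g : Y ⟶ Z), conf f g) → (∃ (Z : E) (g : W ⟶ Z), conf f' g) →
    ∃ (Z : E) (g : W ⟶ Z), conf (f ≫ f') g
  defl_comp : ∀ ⦃X Y W : E⦄ {g : X ⟶ Y} {g' : Y ⟶ W},
    (∃ (Z : E) (f : Z ⟶ X), conf f g) → (∃ (Z : E) (f : Z ⟶ Y), conf f g') →
    ∃ (Z : E) (f : Z ⟶ X), conf f (g ≫ g')
  infl_pushout : ∀ ⦃X Y X' : E⦄ (f : X ⟶ Y) (t : X ⟶ X'),
    (∃ (Z : E) (g : Y ⟶ Z), conf f g) →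
    ∃ (P : E) (inl : Y ⟶ P) (inr : X' ⟶ P),
      IsPushout f t inl inr ∧ ∃ (Z : E) (g : P ⟶ Z), conf inr g
  defl_pullback : ∀ ⦃Y Z T : E⦄ (d : Y ⟶ Z) (t : T ⟶ Z),
    (∃ (X : E) (f : X ⟶ Y), conf f d) →
    ∃ (P : E) (p1 : P ⟶ Y) (p2 : P ⟶ T),
      IsPullback p1 p2 d t ∧ ∃ (X : E) (f : X ⟶ P), conf f p2

namespace ExactStruct

variable {E : Type u} [Category.{v} E] [HasZeroMorphisms E]

/-- `f` is an inflation (admissible monic): the first map of some conflation. -/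
def Inflation (S : ExactStruct E) {X Y : E} (f : X ⟶ Y) : Prop :=
  ∃ (Z : E) (g : Y ⟶ Z), S.conf f g

/-- `g` is a deflation (admissible epic): the second map of some conflation. -/
def Deflation (S : ExactStruct E) {Y Z : E} (g : Y ⟶ Z) : Prop :=
  ∃ (X : E) (f : X ⟶ Y), S.conf f g

end ExactStruct

/-- `FiltLenP conf C n X` : `X` admits a `C`-filtration of length `n` w.r.t. the
conflation class `conf`, i.e. a chain of inflations `0 = X₀ ↣ ⋯ ↣ Xₙ = X` whose
successive cokernels lie in `C`. -/
inductive FiltLenP {E : Type u} [Category.{v} E]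
    (conf : ∀ ⦃X Y Z : E⦄, (X ⟶ Y) → (Y ⟶ Z) → Prop) (C : Set E) : ℕ → E → Prop
  | zero (X : E) : IsZero X → FiltLenP conf C 0 X
  | step {X Y c : E} (n : ℕ) (f : X ⟶ Y) (g : Y ⟶ c) :
      FiltLenP conf C n X → c ∈ C → conf f g → FiltLenP conf C (n + 1) Y

namespace ExactStruct

variable {E : Type u} [Category.{v} E] [HasZeroMorphisms E]

/-- `Filt C` : the objects admitting a finite `C`-filtration. -/
def Filt (S : ExactStruct E) (C : Set E) : Set E :=
  {X | ∃ n, FiltLenP S.conf C n X}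

/-- The conflations of the exact structure induced on the subcategory `W`. -/
def confIn (S : ExactStruct E) (W : Set E) :
    ∀ ⦃X Y Z : E⦄, (X ⟶ Y) → (Y ⟶ Z) → Prop :=
  fun X Y Z f g => S.conf f g ∧ X ∈ W ∧ Y ∈ W ∧ Z ∈ W

/-- A simple object of the exact category `E`. -/
def Simple (S : ExactStruct E) (M : E) : Prop :=
  ¬ IsZero M ∧ ∀ ⦃L N : E⦄ (f : L ⟶ M) (g : M ⟶ N), S.conf f g → IsZero L ∨ IsZero N

/-- A simple object of the extension-closed subcategory `W` with its induced
exact structure. -/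
def SimpleIn (S : ExactStruct E) (W : Set E) (M : E) : Prop :=
  M ∈ W ∧ ¬ IsZero M ∧
    ∀ ⦃L N : E⦄ (f : L ⟶ M) (g : M ⟶ N), S.confIn W f g → IsZero L ∨ IsZero N

/-- `E` is a length exact category: every object has a finite filtration with
simple subquotients. -/
def IsLength (S : ExactStruct E) : Prop :=
  ∀ X : E, ∃ n, FiltLenP S.conf {M | S.Simple M} n X

/-- The subcategory `W` (with its induced exact structure) is length. -/
def IsLengthIn (S : ExactStruct E) (W : Set E) : Prop :=
  ∀ X ∈ W, ∃ n, FiltLenP (S.confIn W) {M | S.SimpleIn W M} n X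

/-- The inclusion of the full subcategory `W` into `E` is exact: every short
exact sequence in (the abelian category) `W` is a conflation of `E`. -/
def InclusionExact (S : ExactStruct E) (W : Set E)
    [Abelian (ObjectProperty.FullSubcategory fun X => X ∈ W)] : Prop :=
  ∀ (A B C : ObjectProperty.FullSubcategory fun X => X ∈ W) (f : A ⟶ B) (g : B ⟶ C)
    (w : f ≫ g = 0), (ShortComplex.mk f g w).ShortExact → S.conf f.hom g.hom

/-- `W` is a wide subcategory of `E`: closed under extensions, abelian, and the
inclusion is exact. -/
def IsWide (S : ExactStruct E) (W : Set E) : Prop :=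
  (∀ ⦃X Y Z : E⦄ (f : X ⟶ Y) (g : Y ⟶ Z), S.conf f g → X ∈ W → Z ∈ W → Y ∈ W) ∧
  ∃ inst : Abelian (ObjectProperty.FullSubcategory fun X => X ∈ W),
    @InclusionExact E _ _ S W inst

end ExactStruct

/-- A brick: a nonzero object all of whose nonzero endomorphisms are
isomorphisms (i.e. the endomorphism ring is a division ring). -/
def Brick {E : Type u} [Category.{v} E] [HasZeroMorphisms E] (X : E) : Prop :=
  𝟙 X ≠ 0 ∧ ∀ f : X ⟶ X, f ≠ 0 → IsIso f

/-- A semibrick: a set of bricks which are pairwise Hom-orthogonal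
(no nonzero morphisms between non-isomorphic members). -/
def Semibrick {E : Type u} [Category.{v} E] [HasZeroMorphisms E] (𝒮 : Set E) : Prop :=
  (∀ X ∈ 𝒮, Brick X) ∧
  ∀ X ∈ 𝒮, ∀ Y ∈ 𝒮, IsEmpty (X ≅ Y) → ∀ f : X ⟶ Y, f = 0

/-- A class of objects closed under isomorphisms. -/
def IsoClosed {E : Type u} [Category.{v} E] (C : Set E) : Prop :=
  ∀ X Y : E, Nonempty (X ≅ Y) → X ∈ C → Y ∈ C

/-- Composite of a chain of morphisms `obj i ⟶ obj (i+1)`. -/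
def comps {E : Type u} [Category.{v} E] (obj : ℕ → E)
    (ι : ∀ i, obj i ⟶ obj (i + 1)) (i : ℕ) : ∀ j, obj i ⟶ obj (i + j)
  | 0 => 𝟙 _
  | j + 1 => comps obj ι i j ≫ ι (i + j)

section Auxiliary

open ExactStruct ZeroObject

variable {E : Type u} [Category.{v} E] [Preadditive E] [HasZeroObject E]
  [HasBinaryBiproducts E]

/-- Transfer a conflation along an alternative cokernel of the same inflation. -/
lemma conf_of_isCokernel (S : ExactStruct E) {X Y Z c : E} {u : X ⟶ Y} {w : Y ⟶ Z}
    {v : Y ⟶ c} (h : S.conf u w) (hv0 : u ≫ v = 0)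
    (hv : IsColimit (CokernelCofork.ofπ v hv0)) : S.conf u v := by
  obtain ⟨hw⟩ := S.conf_isCokernel h
  obtain ⟨t, ht⟩ := CokernelCofork.IsColimit.desc' hw v hv0
  obtain ⟨t', ht'⟩ := CokernelCofork.IsColimit.desc' hv w (S.conf_comp h)
  replace ht : w ≫ t = v := ht
  replace ht' : v ≫ t' = w := ht'
  have htt' : t ≫ t' = 𝟙 Z := by
    apply Cofork.IsColimit.hom_ext hw
    show w ≫ (t ≫ t') = w ≫ 𝟙 Z
    rw [Category.comp_id, ← Category.assoc, ht, ht']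
  have ht't : t' ≫ t = 𝟙 c := by
    apply Cofork.IsColimit.hom_ext hv
    show v ≫ (t' ≫ t) = v ≫ 𝟙 c
    rw [Category.comp_id, ← Category.assoc, ht', ht]
  exact S.conf_iso (Iso.refl X) (Iso.refl Y) ⟨t, t', htt', ht't⟩ h (by simp)
    (by simpa using ht)

/-- The coproduct square over the zero object is a pushout. -/
lemma isPushout_zero_biprod (A B : E) :
    IsPushout (0 : (0 : E) ⟶ B) (0 : (0 : E) ⟶ A)
      (biprod.inr : B ⟶ A ⊞ B) (biprod.inl : A ⟶ A ⊞ B) :=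
  IsPushout.of_isColimit <| PushoutCocone.IsColimit.mk (by simp)
    (fun s => biprod.desc s.inr s.inl)
    (fun s => by simp)
    (fun s => by simp)
    (fun s m h1 h2 => by
      apply biprod.hom_ext' <;> simpa using by first | exact h2 | exact h1)

/-- The split sequence `A ⟶ A ⊞ B ⟶ B` is a conflation. -/
lemma conf_inl_snd (S : ExactStruct E) (A B : E) :
    S.conf (biprod.inl : A ⟶ A ⊞ B) (biprod.snd : A ⊞ B ⟶ B) := by
  have h0 : S.conf (0 : (0 : E) ⟶ B) (𝟙 B) := S.conf_id_right _ _ (isZero_zero E)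
  obtain ⟨P, inl', inr', hpo, Z, w, hw⟩ :=
    S.infl_pushout (0 : (0 : E) ⟶ B) (0 : (0 : E) ⟶ A) ⟨B, 𝟙 B, h0⟩
  have hpo2 := isPushout_zero_biprod (E := E) A B
  set ρ : P ≅ A ⊞ B := hpo.isoIsPushout _ _ hpo2 with hρ
  have hinr : inr' ≫ ρ.hom = biprod.inl := hpo.inr_isoIsPushout_hom _ _ hpo2
  have h1 : S.conf (biprod.inl : A ⟶ A ⊞ B) (ρ.inv ≫ w) :=
    S.conf_iso (Iso.refl A) ρ (Iso.refl Z) hw (by simpa using hinr) (by simp)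
  refine conf_of_isCokernel S h1 (by simp) ?_
  refine CokernelCofork.IsColimit.ofπ _ _ (fun {Z'} k hk => biprod.inr ≫ k) ?_ ?_
  · intro Z' k hk
    apply biprod.hom_ext'
    · show biprod.inl ≫ biprod.snd ≫ biprod.inr ≫ k = biprod.inl ≫ k
      rw [hk, ← Category.assoc, biprod.inl_snd, zero_comp]
    · show biprod.inr ≫ biprod.snd ≫ biprod.inr ≫ k = biprod.inr ≫ k
      rw [← Category.assoc, biprod.inr_snd, Category.id_comp]
  · intro Z' k hk m hm
    have h2 : biprod.inr ≫ (biprod.snd : A ⊞ B ⟶ B) ≫ m = biprod.inr ≫ k := by rw [hm]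
    rw [← Category.assoc, biprod.inr_snd, Category.id_comp] at h2
    exact h2

/-- "Noether" lemma: the composite of two inflations is an inflation whose
cokernel is an extension of the two cokernels. -/
lemma conf_noether (S : ExactStruct E) {s X Y Q' c : E} {i : s ⟶ X} {p : X ⟶ Q'}
    {f : X ⟶ Y} {g : Y ⟶ c} (h1 : S.conf i p) (h2 : S.conf f g) :
    ∃ (Q : E) (g' : Y ⟶ Q) (u : Q' ⟶ Q) (v : Q ⟶ c),
      S.conf (i ≫ f) g' ∧ S.conf u v := by
  obtain ⟨Q, g', hQ⟩ := S.infl_comp ⟨_, _, h1⟩ ⟨_, _, h2⟩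
  obtain ⟨hp⟩ := S.conf_isCokernel h1
  obtain ⟨hg'⟩ := S.conf_isCokernel hQ
  obtain ⟨hg⟩ := S.conf_isCokernel h2
  obtain ⟨u, hu⟩ := CokernelCofork.IsColimit.desc' hp (f ≫ g')
    (by rw [← Category.assoc]; exact S.conf_comp hQ)
  obtain ⟨v, hv⟩ := CokernelCofork.IsColimit.desc' hg' g
    (by rw [Category.assoc, S.conf_comp h2, comp_zero])
  replace hu : p ≫ u = f ≫ g' := hu
  replace hv : g' ≫ v = g := hv
  have hcomm : f ≫ g' = p ≫ u := hu.symm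
  -- the square (f, p; g', u) is a pushout
  have hpo : IsPushout f p g' u := by
    refine IsPushout.of_isColimit <| PushoutCocone.IsColimit.mk hcomm
      (fun t => (CokernelCofork.IsColimit.desc' hg' t.inl
        (by rw [Category.assoc, t.condition, ← Category.assoc, S.conf_comp h1,
          zero_comp])).1) ?_ ?_ ?_
    · intro t
      exact (CokernelCofork.IsColimit.desc' hg' t.inl _).2
    · intro t
      set d := (CokernelCofork.IsColimit.desc' hg' t.inl
        (by rw [Category.assoc, t.condition, ← Category.assoc, S.conf_comp h1,
          zero_comp])) with hd
      have h3 : g' ≫ d.1 = t.inl := d.2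
      apply Cofork.IsColimit.hom_ext hp
      show p ≫ u ≫ d.1 = p ≫ t.inr
      rw [← Category.assoc, ← hcomm, Category.assoc, h3, t.condition]
    · intro t m hm1 hm2
      set d := (CokernelCofork.IsColimit.desc' hg' t.inl
        (by rw [Category.assoc, t.condition, ← Category.assoc, S.conf_comp h1,
          zero_comp])) with hd
      have h3 : g' ≫ d.1 = t.inl := d.2
      apply Cofork.IsColimit.hom_ext hg'
      show g' ≫ m = g' ≫ d.1
      rw [h3, hm1]
  -- transfer the conflation from the canonical pushout
  obtain ⟨P, inl', inr', hpo', Z, w, hw⟩ := S.infl_pushout f p ⟨c, g, h2⟩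
  set ρ : P ≅ Q := hpo'.isoIsPushout _ _ hpo with hρ
  have hinr : inr' ≫ ρ.hom = u := hpo'.inr_isoIsPushout_hom _ _ hpo
  have hconfu : S.conf u (ρ.inv ≫ w) :=
    S.conf_iso (Iso.refl Q') ρ (Iso.refl Z) hw (by simpa using hinr) (by simp)
  have huv0 : u ≫ v = 0 := by
    apply Cofork.IsColimit.hom_ext hp
    show p ≫ u ≫ v = p ≫ 0
    rw [comp_zero, ← Category.assoc, ← hcomm, Category.assoc, hv, S.conf_comp h2]
  refine ⟨Q, g', u, v, hQ, conf_of_isCokernel S hconfu huv0 ?_⟩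
  refine CokernelCofork.IsColimit.ofπ _ _
    (fun {Z'} k hk => (CokernelCofork.IsColimit.desc' hg (g' ≫ k)
      (by rw [← Category.assoc, hcomm, Category.assoc, hk, comp_zero])).1) ?_ ?_
  · intro Z' k hk
    set d := (CokernelCofork.IsColimit.desc' hg (g' ≫ k)
      (by rw [← Category.assoc, hcomm, Category.assoc, hk, comp_zero])) with hd
    have h3 : g ≫ d.1 = g' ≫ k := d.2
    apply Cofork.IsColimit.hom_ext hg'
    show g' ≫ v ≫ d.1 = g' ≫ k
    rw [← Category.assoc, hv, h3]
  · intro Z' k hk m hm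
    set d := (CokernelCofork.IsColimit.desc' hg (g' ≫ k)
      (by rw [← Category.assoc, hcomm, Category.assoc, hk, comp_zero])) with hd
    have h3 : g ≫ d.1 = g' ≫ k := d.2
    apply Cofork.IsColimit.hom_ext hg
    show g ≫ m = g ≫ d.1
    rw [h3, ← hv, Category.assoc, hm]

end Auxiliary

section Main

open ExactStruct

variable {E : Type u} [Category.{v} E] [Preadditive E] [HasZeroObject E]
  [HasBinaryBiproducts E]

lemma hom_from_brick_aux (S : ExactStruct E) {𝒮 : Set E} (h𝒮 : Semibrick 𝒮)
    {s : E} (hs : s ∈ 𝒮) :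
    ∀ (n : ℕ) {Y : E}, FiltLenP S.conf 𝒮 n Y → ∀ φ : s ⟶ Y,
      φ = 0 ∨ ∃ (Q : E) (g : Y ⟶ Q), S.conf φ g ∧ Q ∈ S.Filt 𝒮 := by
  intro n
  induction n with
  | zero =>
    intro Y hn φ
    left
    cases hn with
    | zero _ hz => exact hz.eq_of_tgt φ 0
  | succ n ih =>
    intro Y hn φ
    cases hn with
    | step _ f g hX hc hfg =>
      rename_i X c
      by_cases hψ : φ ≫ g = 0
      · -- φ factors through the kernel X
        obtain ⟨hk⟩ := S.conf_isKernel hfg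
        obtain ⟨φ', hφ'⟩ := KernelFork.IsLimit.lift' hk φ hψ
        simp only [Fork.ι_ofι, KernelFork.ι_ofι] at hφ'
        rcases ih hX φ' with h0 | ⟨Q', p, hp, hQ'⟩
        · left; rw [← hφ', h0, zero_comp]
        · right
          obtain ⟨Q, g', u, v, hQconf, huv⟩ := conf_noether S hp hfg
          refine ⟨Q, g', by rwa [hφ'] at hQconf, ?_⟩
          obtain ⟨m, hm⟩ := hQ'
          exact ⟨m + 1, .step m u v hm hc huv⟩
      · -- φ ≫ g is an isomorphism; the conflation splits
        right
        have hne : ¬ IsEmpty (s ≅ c) := fun h => hψ (h𝒮.2 s hs c hc h (φ ≫ g))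
        rw [not_isEmpty_iff] at hne
        obtain ⟨e⟩ := hne
        have hθ : (φ ≫ g) ≫ e.inv ≠ 0 := by
          intro h
          apply hψ
          rw [← Category.comp_id (φ ≫ g), ← e.inv_hom_id, ← Category.assoc, h, zero_comp]
        haveI hθiso : IsIso ((φ ≫ g) ≫ e.inv) := (h𝒮.1 s hs).2 _ hθ
        haveI hψiso : IsIso (φ ≫ g) := by
          have : φ ≫ g = ((φ ≫ g) ≫ e.inv) ≫ e.hom := by simp
          rw [this]; infer_instance
        set ψ := φ ≫ g with hψdef
        set ρ : Y ⟶ s := g ≫ inv ψ with hρdef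
        have hφρ : φ ≫ ρ = 𝟙 s := by
          rw [hρdef, ← Category.assoc, ← hψdef, IsIso.hom_inv_id]
        have hfg0 : f ≫ g = 0 := S.conf_comp hfg
        obtain ⟨hk⟩ := S.conf_isKernel hfg
        have hq : (𝟙 Y - ρ ≫ φ) ≫ g = 0 := by
          rw [Preadditive.sub_comp, Category.id_comp, Category.assoc, ← hψdef,
            hρdef, Category.assoc, IsIso.inv_hom_id, Category.comp_id, sub_self]
        obtain ⟨π, hπ⟩ := KernelFork.IsLimit.lift' hk (𝟙 Y - ρ ≫ φ) hq
        simp only [Fork.ι_ofι, KernelFork.ι_ofι] at hπ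
        have hfρ : f ≫ ρ = 0 := by
          rw [hρdef, ← Category.assoc, hfg0, zero_comp]
        have hφπ : φ ≫ π = 0 := by
          apply Fork.IsLimit.hom_ext hk
          simp only [Fork.ι_ofι, KernelFork.ι_ofι, Category.assoc, hπ, zero_comp]
          rw [Preadditive.comp_sub, Category.comp_id, ← Category.assoc, hφρ,
            Category.id_comp, sub_self]
        have hfπ : f ≫ π = 𝟙 X := by
          apply Fork.IsLimit.hom_ext hk
          simp only [Fork.ι_ofι, KernelFork.ι_ofι, Category.assoc, hπ, Category.id_comp]
          rw [Preadditive.comp_sub, Category.comp_id, ← Category.assoc, hfρ,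
            zero_comp, sub_zero]
        -- the iso Y ≅ s ⊞ X
        have hβ1 : biprod.desc φ f ≫ biprod.lift ρ π = 𝟙 (s ⊞ X) := by
          apply biprod.hom_ext' <;> apply biprod.hom_ext <;>
            simp [hφρ, hφπ, hfρ, hfπ]
        have hβ2 : biprod.lift ρ π ≫ biprod.desc φ f = 𝟙 Y := by
          rw [biprod.lift_desc, hπ, add_sub_cancel]
        set β : s ⊞ X ≅ Y := ⟨biprod.desc φ f, biprod.lift ρ π, hβ1, hβ2⟩ with hβ
        have hconf : S.conf φ π := by
          refine S.conf_iso (Iso.refl s) β (Iso.refl X) (conf_inl_snd S s X) ?_ ?_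
          · simp [hβ]
          · show biprod.snd ≫ (Iso.refl X).hom = β.hom ≫ π
            rw [Iso.refl_hom, Category.comp_id]
            symm
            apply biprod.hom_ext' <;> simp [hφπ, hfπ, hβ]
        exact ⟨X, π, hconf, ⟨n, hX⟩⟩

end Main

/-- If `𝒮` is a semibrick, `s ∈ 𝒮`, `Y ∈ Filt 𝒮` and
`φ : s ⟶ Y`, then `φ` is zero or `φ` is an inflation whose cokernel `Y/s`
lies in `Filt 𝒮`. -/
theorem hom_from_brick_zero_or_inflation {E : Type u} [Category.{v} E] [Preadditive E]
    [HasZeroObject E] [HasBinaryBiproducts E] (S : ExactStruct E)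
    {𝒮 : Set E} (h𝒮 : Semibrick 𝒮) {s Y : E} (hs : s ∈ 𝒮) (hY : Y ∈ S.Filt 𝒮)
    (φ : s ⟶ Y) :
    φ = 0 ∨ ∃ (Q : E) (g : Y ⟶ Q), S.conf φ g ∧ Q ∈ S.Filt 𝒮 := by
  obtain ⟨n, hn⟩ := hY
  exact hom_from_brick_aux S h𝒮 hs n hn φ
end

section
/- Dually, let S be a semibrick in an exact category E, S ∈ S, X ∈ Filt(S), and φ : X → S a morphism. Then φ is zero, or φ is a deflation whose kernel lies in Filt(S). -/
open CategoryTheory CategoryTheory.Limits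

universe v u

namespace ExactStruct

section Helpers

variable {E : Type u} [Category.{v} E] [HasZeroMorphisms E] (S : ExactStruct E)

lemma conf_mono' {X Y Z : E} {f : X ⟶ Y} {g : Y ⟶ Z} (h : S.conf f g) : Mono f := by
  obtain ⟨hf⟩ := S.conf_isKernel h
  simpa using mono_of_isLimit_fork hf

lemma conf_epi' {X Y Z : E} {f : X ⟶ Y} {g : Y ⟶ Z} (h : S.conf f g) : Epi g := by
  obtain ⟨hg⟩ := S.conf_isCokernel h
  simpa using epi_of_isColimit_cofork hg

/-- Replace the cokernel part of a conflation by any other cokernel of `f`. -/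
lemma conf_of_cokernel {X Y Z Q : E} {f : X ⟶ Y} {g : Y ⟶ Z} (h : S.conf f g)
    {q : Y ⟶ Q} (hq : f ≫ q = 0) (hcolim : IsColimit (CokernelCofork.ofπ q hq)) :
    S.conf f q := by
  obtain ⟨hg⟩ := S.conf_isCokernel h
  refine S.conf_iso (Iso.refl X) (Iso.refl Y) (hg.coconePointUniqueUpToIso hcolim) h
    (by simp) ?_
  have h2 := hg.comp_coconePointUniqueUpToIso_hom hcolim WalkingParallelPair.one
  rw [Cofork.app_one_eq_π, Cofork.app_one_eq_π, Cofork.π_ofπ, Cofork.π_ofπ] at h2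
  simpa using h2

/-- Replace the kernel part of a conflation by any other kernel of `g`. -/
lemma conf_of_kernel {X Y Z K : E} {f : X ⟶ Y} {g : Y ⟶ Z} (h : S.conf f g)
    {k : K ⟶ Y} (hk : k ≫ g = 0) (hlim : IsLimit (KernelFork.ofι k hk)) :
    S.conf k g := by
  obtain ⟨hf⟩ := S.conf_isKernel h
  refine S.conf_iso (hf.conePointUniqueUpToIso hlim) (Iso.refl Y) (Iso.refl Z) h
    ?_ (by simp)
  have h2 := IsLimit.conePointUniqueUpToIso_hom_comp hf hlim WalkingParallelPair.zero
  rw [Fork.app_zero_eq_ι, Fork.app_zero_eq_ι, Fork.ι_ofι, Fork.ι_ofι] at h2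
  simpa using h2.symm

/-- Transport a conflation along an isomorphism of the middle object. -/
lemma conf_mid_iso {X Y Z Y' : E} {f : X ⟶ Y} {g : Y ⟶ Z} (e : Y ≅ Y') (h : S.conf f g) :
    S.conf (f ≫ e.hom) (e.inv ≫ g) :=
  S.conf_iso (Iso.refl X) e (Iso.refl Z) h (by simp) (by simp)

/-- Transport a conflation along an isomorphism of the cokernel object. -/
lemma conf_right_iso {X Y Z Z' : E} {f : X ⟶ Y} {g : Y ⟶ Z} (e : Z ≅ Z') (h : S.conf f g) :
    S.conf f (g ≫ e.hom) :=
  S.conf_iso (Iso.refl X) (Iso.refl Y) e h (by simp) (by simp)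

end Helpers

section Biprod

variable {E : Type u} [Category.{v} E] [Preadditive E] [HasZeroObject E]
  [HasBinaryBiproducts E] (S : ExactStruct E)

/-- The split conflation `Y ↣ X ⊞ Y ↠ X`. -/
lemma conf_binr_bfst (X Y : E) :
    S.conf (biprod.inr : Y ⟶ X ⊞ Y) (biprod.fst : X ⊞ Y ⟶ X) := by
  obtain ⟨O, hO⟩ := HasZeroObject.zero (C := E)
  have hinfl : ∃ (Z : E) (g : X ⟶ Z), S.conf (0 : O ⟶ X) g :=
    ⟨X, 𝟙 X, S.conf_id_right O X hO⟩
  obtain ⟨P, pl, pr, hPO, Z₁, g₁, h₁⟩ := S.infl_pushout (0 : O ⟶ X) (0 : O ⟶ Y) hinfl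
  have hzc : (0 : O ⟶ X) ≫ (biprod.inl : X ⟶ X ⊞ Y) = (0 : O ⟶ Y) ≫ biprod.inr := by simp
  let θhom : P ⟶ X ⊞ Y := hPO.desc biprod.inl biprod.inr hzc
  let θinv : (X ⊞ Y : E) ⟶ P := biprod.desc pl pr
  have hθ1 : θhom ≫ θinv = 𝟙 P := by
    apply hPO.hom_ext
    · rw [← Category.assoc, hPO.inl_desc, biprod.inl_desc, Category.comp_id]
    · rw [← Category.assoc, hPO.inr_desc, biprod.inr_desc, Category.comp_id]
  have hθ2 : θinv ≫ θhom = 𝟙 (X ⊞ Y) := by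
    apply biprod.hom_ext'
    · rw [← Category.assoc, biprod.inl_desc, hPO.inl_desc, Category.comp_id]
    · rw [← Category.assoc, biprod.inr_desc, hPO.inr_desc, Category.comp_id]
  have hpr : pr ≫ θhom = (biprod.inr : Y ⟶ X ⊞ Y) := hPO.inr_desc _ _ _
  have hmid : S.conf (biprod.inr : Y ⟶ X ⊞ Y) (θinv ≫ g₁) := by
    refine S.conf_iso (Iso.refl Y) (⟨θhom, θinv, hθ1, hθ2⟩ : P ≅ X ⊞ Y) (Iso.refl Z₁)
      h₁ ?_ ?_
    · show pr ≫ θhom = 𝟙 Y ≫ biprod.inr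
      rw [Category.id_comp, hpr]
    · show g₁ ≫ 𝟙 Z₁ = θhom ≫ θinv ≫ g₁
      rw [Category.comp_id, ← Category.assoc, hθ1, Category.id_comp]
  refine S.conf_of_cokernel hmid (q := biprod.fst) (by simp) ?_
  refine CokernelCofork.IsColimit.ofπ _ _ (fun {Z'} h' w => biprod.inl ≫ h') ?_ ?_
  · intro Z' h' w
    have htot := biprod.total (X := X) (Y := Y)
    calc biprod.fst ≫ biprod.inl ≫ h'
        = (biprod.fst ≫ biprod.inl) ≫ h' + (biprod.snd ≫ biprod.inr) ≫ h' := by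
          rw [Category.assoc, Category.assoc, w, comp_zero, add_zero]
      _ = h' := by rw [← Preadditive.add_comp, htot, Category.id_comp]
  · intro Z' h' w m hm
    show m = biprod.inl ≫ h'
    rw [← hm, ← Category.assoc, biprod.inl_fst, Category.id_comp]

end Biprod

end ExactStruct

section Main

variable {E : Type u} [Category.{v} E] [Preadditive E] [HasZeroObject E]
  [HasBinaryBiproducts E]

private lemma aux_key (S : ExactStruct E) {𝒮 : Set E} (h𝒮 : Semibrick 𝒮) {s : E}
    (hs : s ∈ 𝒮) :
    ∀ (n : ℕ) (X : E), FiltLenP S.conf 𝒮 n X → ∀ φ : X ⟶ s,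
      φ = 0 ∨ ∃ (K : E) (k : K ⟶ X), S.conf k φ ∧ K ∈ S.Filt 𝒮 := by
  intro n
  induction n with
  | zero =>
    intro X hF φ
    cases hF with
    | zero _ h => exact Or.inl (h.eq_of_src φ 0)
  | succ n IH =>
    intro Y hF φ
    cases hF with
    | step _ f g hX' hc hfg =>
      rename_i X' c
      rcases IH X' hX' (f ≫ φ) with hψ0 | ⟨K, k, hkψ, hKF⟩
      · -- the restriction of φ to X' vanishes: φ factors through the brick quotient c
        obtain ⟨hcog⟩ := S.conf_isCokernel hfg
        obtain ⟨φbar, hφbar⟩ := CokernelCofork.IsColimit.desc' hcog φ hψ0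
        rw [Cofork.π_ofπ] at hφbar
        by_cases hb0 : φbar = 0
        · exact Or.inl (by rw [← hφbar, hb0, comp_zero])
        · have hiso : ∃ _ : c ≅ s, True := by
            by_contra hne
            have hempty : IsEmpty (c ≅ s) := ⟨fun e => hne ⟨e, trivial⟩⟩
            exact hb0 (h𝒮.2 c hc s hs hempty φbar)
          obtain ⟨e, -⟩ := hiso
          have hendo : e.inv ≫ φbar ≠ 0 := by
            intro h0
            apply hb0
            have h1 : e.hom ≫ e.inv ≫ φbar = 0 := by rw [h0, comp_zero]
            rwa [← Category.assoc, e.hom_inv_id, Category.id_comp] at h1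
          have hII : IsIso (e.inv ≫ φbar) := (h𝒮.1 s hs).2 _ hendo
          have hisoφbar : IsIso φbar := by
            have h2 : φbar = e.hom ≫ (e.inv ≫ φbar) := by
              rw [← Category.assoc, e.hom_inv_id, Category.id_comp]
            rw [h2]; infer_instance
          have hconf : S.conf f φ := by
            have h3 := S.conf_right_iso (asIso φbar) hfg
            simpa [hφbar] using h3
          exact Or.inr ⟨X', f, hconf, ⟨n, hX'⟩⟩
      · -- f ≫ φ is a deflation with kernel K ∈ Filt 𝒮
        set ψ : X' ⟶ s := f ≫ φ with hψdef
        obtain ⟨Q, inl, inr, hPO, Z₁, g₁, h₁⟩ := S.infl_pushout f ψ ⟨c, g, hfg⟩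
        haveI hepiψ : Epi ψ := S.conf_epi' hkψ
        haveI hepig : Epi g := S.conf_epi' hfg
        have hu : f ≫ φ = ψ ≫ 𝟙 s := by rw [Category.comp_id, hψdef]
        let u : Q ⟶ s := hPO.desc φ (𝟙 s) hu
        have hinl_u : inl ≫ u = φ := hPO.inl_desc _ _ _
        have hinr_u : inr ≫ u = 𝟙 s := hPO.inr_desc _ _ _
        have hq0 : f ≫ g = ψ ≫ (0 : s ⟶ c) := by rw [S.conf_comp hfg, comp_zero]
        let qbar : Q ⟶ c := hPO.desc g 0 hq0
        have hinl_q : inl ≫ qbar = g := hPO.inl_desc _ _ _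
        have hinr_q : inr ≫ qbar = 0 := hPO.inr_desc _ _ _
        haveI hepiq : Epi qbar := by
          constructor
          intro T a b hab
          have h1 : inl ≫ qbar ≫ a = inl ≫ qbar ≫ b := by rw [hab]
          rw [← Category.assoc, hinl_q] at h1
          rw [← Category.assoc, hinl_q] at h1
          exact (cancel_epi g).mp h1
        -- qbar is a cokernel of inr
        obtain ⟨hcog⟩ := S.conf_isCokernel hfg
        have hkey : ∀ {T : E} {h' : Q ⟶ T}, inr ≫ h' = 0 → f ≫ inl ≫ h' = 0 := by
          intro T h' w
          have h2 : f ≫ inl ≫ h' = ψ ≫ inr ≫ h' := by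
            rw [← Category.assoc, ← Category.assoc, hPO.w]
          rw [h2, w, comp_zero]
        have hqcolim : IsColimit (CokernelCofork.ofπ qbar hinr_q) := by
          refine CokernelCofork.IsColimit.ofπ _ _
            (fun {T} h' w => (CokernelCofork.IsColimit.desc' hcog (inl ≫ h') (hkey w)).1)
            ?_ ?_
          · intro T h' w
            have hy : g ≫ (CokernelCofork.IsColimit.desc' hcog (inl ≫ h') (hkey w)).1
                = inl ≫ h' := (CokernelCofork.IsColimit.desc' hcog (inl ≫ h') (hkey w)).2
            show qbar ≫ (CokernelCofork.IsColimit.desc' hcog (inl ≫ h') (hkey w)).1 = h'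
            apply hPO.hom_ext
            · rw [← Category.assoc, hinl_q, hy]
            · rw [← Category.assoc, hinr_q, zero_comp, w]
          · intro T h' w m hm
            show m = (CokernelCofork.IsColimit.desc' hcog (inl ≫ h') (hkey w)).1
            have hy : g ≫ (CokernelCofork.IsColimit.desc' hcog (inl ≫ h') (hkey w)).1
                = inl ≫ h' := (CokernelCofork.IsColimit.desc' hcog (inl ≫ h') (hkey w)).2
            apply Cofork.IsColimit.hom_ext hcog
            show g ≫ m = g ≫ (CokernelCofork.IsColimit.desc' hcog (inl ≫ h') (hkey w)).1
            rw [hy, ← hinl_q, Category.assoc, hm]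
        have hconf_inr : S.conf inr qbar := S.conf_of_cokernel h₁ hinr_q hqcolim
        -- split the conflation s ↣ Q ↠ c using the retraction u of inr
        have hw0 : inr ≫ (𝟙 Q - u ≫ inr) = 0 := by
          rw [Preadditive.comp_sub, Category.comp_id, ← Category.assoc, hinr_u,
            Category.id_comp, sub_self]
        obtain ⟨hqcolim'⟩ := S.conf_isCokernel hconf_inr
        obtain ⟨t₀, ht₀⟩ := CokernelCofork.IsColimit.desc' hqcolim' (𝟙 Q - u ≫ inr) hw0
        let t : c ⟶ Q := t₀
        have ht : qbar ≫ t = 𝟙 Q - u ≫ inr := ht₀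
        have htq : t ≫ qbar = 𝟙 c := by
          have h1 : qbar ≫ t ≫ qbar = qbar ≫ 𝟙 c := by
            rw [← Category.assoc, ht, Category.comp_id, Preadditive.sub_comp,
              Category.id_comp, Category.assoc, hinr_q, comp_zero, sub_zero]
          exact (cancel_epi qbar).mp h1
        have htu : t ≫ u = 0 := by
          have h1 : qbar ≫ t ≫ u = qbar ≫ 0 := by
            rw [← Category.assoc, ht, comp_zero, Preadditive.sub_comp,
              Category.id_comp, Category.assoc, hinr_u, Category.comp_id, sub_self]
          exact (cancel_epi qbar).mp h1
        -- the isomorphism Q ≅ s ⊞ c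
        let v : Q ⟶ s ⊞ c := biprod.lift u qbar
        let v' : (s ⊞ c : E) ⟶ Q := biprod.fst ≫ inr + biprod.snd ≫ t
        have hvv' : v ≫ v' = 𝟙 Q := by
          have h1 : v ≫ v' = u ≫ inr + qbar ≫ t := by
            simp [v, v', Preadditive.comp_add]
          rw [h1, ht]
          abel
        have hv'v : v' ≫ v = 𝟙 (s ⊞ c) := by
          apply biprod.hom_ext' <;> apply biprod.hom_ext <;>
            simp [v, v', hinr_u, hinr_q, htq, htu]
        have hconf_tu : S.conf t u := by
          refine S.conf_iso (Iso.refl c) (⟨v, v', hvv', hv'v⟩ : Q ≅ s ⊞ c).symm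
            (Iso.refl s) (S.conf_binr_bfst s c) ?_ ?_
          · show biprod.inr ≫ v' = 𝟙 c ≫ t
            simp [v', Preadditive.comp_add]
          · show biprod.fst ≫ 𝟙 s = v' ≫ u
            simp [v', Preadditive.add_comp, hinr_u, htu]
        -- k ≫ f is an inflation with cokernel inl
        obtain ⟨G, g₀, h₀⟩ := S.infl_comp ⟨s, ψ, hkψ⟩ ⟨c, g, hfg⟩
        have hkfinl : (k ≫ f) ≫ inl = 0 := by
          rw [Category.assoc, hPO.w, ← Category.assoc, S.conf_comp hkψ, zero_comp]
        obtain ⟨hcoψ⟩ := S.conf_isCokernel hkψ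
        have hkf0 : ∀ {T : E} {h' : Y ⟶ T}, (k ≫ f) ≫ h' = 0 → k ≫ f ≫ h' = 0 := by
          intro T h' w
          rw [← Category.assoc]; exact w
        have hinlcolim : IsColimit (CokernelCofork.ofπ inl hkfinl) := by
          refine CokernelCofork.IsColimit.ofπ _ _
            (fun {T} h' w => hPO.desc h'
              ((CokernelCofork.IsColimit.desc' hcoψ (f ≫ h') (hkf0 w)).1) (by
                have h4 : ψ ≫ (CokernelCofork.IsColimit.desc' hcoψ (f ≫ h') (hkf0 w)).1
                    = f ≫ h' := (CokernelCofork.IsColimit.desc' hcoψ (f ≫ h') (hkf0 w)).2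
                exact h4.symm)) ?_ ?_
          · intro T h' w
            exact hPO.inl_desc _ _ _
          · intro T h' w m hm
            show m = hPO.desc h' ((CokernelCofork.IsColimit.desc' hcoψ (f ≫ h') (hkf0 w)).1) _
            apply hPO.hom_ext
            · rw [hPO.inl_desc]
              exact hm
            · rw [hPO.inr_desc]
              have h4 : ψ ≫ (CokernelCofork.IsColimit.desc' hcoψ (f ≫ h') (hkf0 w)).1
                  = f ≫ h' := (CokernelCofork.IsColimit.desc' hcoψ (f ≫ h') (hkf0 w)).2
              apply (cancel_epi ψ).mp
              rw [h4, ← Category.assoc, ← hPO.w, Category.assoc, hm]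
        have hconf_kf_inl : S.conf (k ≫ f) inl := S.conf_of_cokernel h₀ hkfinl hinlcolim
        -- φ = inl ≫ u is a deflation
        obtain ⟨N, m, hmφ'⟩ := S.defl_comp ⟨K, k ≫ f, hconf_kf_inl⟩ ⟨c, t, hconf_tu⟩
        rw [hinl_u] at hmφ'
        -- now show that the kernel N lies in Filt 𝒮
        obtain ⟨hkerφ⟩ := S.conf_isKernel hmφ'
        haveI hmono_m : Mono m := S.conf_mono' hmφ'
        obtain ⟨hkeru⟩ := S.conf_isKernel hconf_tu
        haveI hmono_t : Mono t := S.conf_mono' hconf_tu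
        have hminl : (m ≫ inl) ≫ u = 0 := by
          rw [Category.assoc, hinl_u]; exact S.conf_comp hmφ'
        obtain ⟨e₀, he₀⟩ := KernelFork.IsLimit.lift' hkeru (m ≫ inl) hminl
        let e : N ⟶ c := e₀
        have he : e ≫ t = m ≫ inl := he₀
        -- (N, m, e) is a pullback of inl along t
        have hPBN : IsPullback m e inl t := by
          refine IsPullback.of_isLimit' ⟨he.symm⟩ ?_
          have hlift0 : ∀ sc : PullbackCone inl t, sc.fst ≫ φ = 0 := by
            intro sc
            rw [← hinl_u, ← Category.assoc, sc.condition, Category.assoc,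
              S.conf_comp hconf_tu, comp_zero]
          refine PullbackCone.IsLimit.mk _ (fun sc =>
            (KernelFork.IsLimit.lift' hkerφ sc.fst (hlift0 sc)).1) ?_ ?_ ?_
          · intro sc
            have h6 : (KernelFork.IsLimit.lift' hkerφ sc.fst (hlift0 sc)).1 ≫ m = sc.fst :=
              (KernelFork.IsLimit.lift' hkerφ sc.fst (hlift0 sc)).2
            exact h6
          · intro sc
            have h6 : (KernelFork.IsLimit.lift' hkerφ sc.fst (hlift0 sc)).1 ≫ m = sc.fst :=
              (KernelFork.IsLimit.lift' hkerφ sc.fst (hlift0 sc)).2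
            show (KernelFork.IsLimit.lift' hkerφ sc.fst (hlift0 sc)).1 ≫ e = sc.snd
            apply (cancel_mono t).mp
            rw [Category.assoc, he, ← Category.assoc, h6, sc.condition]
          · intro sc m' hm1 hm2
            show m' = (KernelFork.IsLimit.lift' hkerφ sc.fst (hlift0 sc)).1
            have h6 : (KernelFork.IsLimit.lift' hkerφ sc.fst (hlift0 sc)).1 ≫ m = sc.fst :=
              (KernelFork.IsLimit.lift' hkerφ sc.fst (hlift0 sc)).2
            apply (cancel_mono m).mp
            rw [h6, hm1]
        obtain ⟨P, p1, p2, hPB, W, w₂, hw2⟩ := S.defl_pullback inl t ⟨K, k ≫ f, hconf_kf_inl⟩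
        have hβe : (hPB.isoIsPullback _ _ hPBN).hom ≫ e = p2 :=
          IsPullback.isoIsPullback_hom_snd (h := hPB) (h' := hPBN)
        have hconf_we : S.conf (w₂ ≫ (hPB.isoIsPullback _ _ hPBN).hom) e := by
          refine S.conf_iso (Iso.refl W) (hPB.isoIsPullback _ _ hPBN) (Iso.refl c) hw2
            (by simp) ?_
          rw [Iso.refl_hom, Category.comp_id, hβe]
        -- κ : K ⟶ N is a kernel of e
        have hkfφ : (k ≫ f) ≫ φ = 0 := by
          rw [Category.assoc, ← hψdef]; exact S.conf_comp hkψ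
        obtain ⟨κ₀, hκ₀⟩ := KernelFork.IsLimit.lift' hkerφ (k ≫ f) hkfφ
        let κ : K ⟶ N := κ₀
        have hκ : κ ≫ m = k ≫ f := hκ₀
        have hκe : κ ≫ e = 0 := by
          apply (cancel_mono t).mp
          rw [Category.assoc, he, ← Category.assoc, hκ, hkfinl, zero_comp]
        haveI hmono_κ : Mono κ := by
          have hkm : Mono (κ ≫ m) := by
            rw [hκ]
            haveI := S.conf_mono' hkψ
            haveI := S.conf_mono' hfg
            exact mono_comp _ _
          haveI := hkm
          exact mono_of_mono κ m
        obtain ⟨hkerinl⟩ := S.conf_isKernel hconf_kf_inl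
        have hκlim : IsLimit (KernelFork.ofι κ hκe) := by
          refine KernelFork.IsLimit.ofι' κ hκe (fun {T} z hz => ?_)
          have hzm : (z ≫ m) ≫ inl = 0 := by
            rw [Category.assoc, ← he, ← Category.assoc, hz, zero_comp]
          obtain ⟨y, hy⟩ := KernelFork.IsLimit.lift' hkerinl (z ≫ m) hzm
          have hy' : y ≫ (k ≫ f) = z ≫ m := hy
          refine ⟨y, ?_⟩
          apply (cancel_mono m).mp
          rw [Category.assoc, hκ, hy']
        have hconf_κe : S.conf κ e := S.conf_of_kernel hconf_we hκe hκlim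
        obtain ⟨nK, hFK⟩ := hKF
        exact Or.inr ⟨N, m, hmφ', ⟨nK + 1, FiltLenP.step nK κ e hFK hc hconf_κe⟩⟩

end Main

/-- **dual of Statement 6.** If `𝒮` is a semibrick, `s ∈ 𝒮`,
`X ∈ Filt 𝒮` and `φ : X ⟶ s`, then `φ` is zero or `φ` is a deflation whose
kernel lies in `Filt 𝒮`. -/
theorem hom_to_brick_zero_or_deflation {E : Type u} [Category.{v} E] [Preadditive E]
    [HasZeroObject E] [HasBinaryBiproducts E] (S : ExactStruct E)
    {𝒮 : Set E} (h𝒮 : Semibrick 𝒮) {s X : E} (hs : s ∈ 𝒮) (hX : X ∈ S.Filt 𝒮)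
    (φ : X ⟶ s) :
    φ = 0 ∨ ∃ (K : E) (k : K ⟶ X), S.conf k φ ∧ K ∈ S.Filt 𝒮 := by
  obtain ⟨n, hF⟩ := hX
  exact aux_key S h𝒮 hs n X hF φ
end

section
/- If S is a semibrick in an exact category E and φ : X → Y is an inflation in E with X, Y ∈ Filt(S), then the cokernel Y/X belongs to Filt(S). -/
open CategoryTheory CategoryTheory.Limits

universe v u

section Auxiliary

open ZeroObject

variable {E : Type u} [Category.{v} E] [Preadditive E] {S : ExactStruct E}

/-- The second map of a conflation is an epimorphism. -/
lemma aux_conf_epi {X Y Z : E} {f : X ⟶ Y} {g : Y ⟶ Z} (h : S.conf f g) : Epi g :=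
  ⟨fun _ _ huv => Cofork.IsColimit.hom_ext (S.conf_isCokernel h).some (by simpa using huv)⟩

/-- The first map of a conflation is a monomorphism. -/
lemma aux_conf_mono {X Y Z : E} {f : X ⟶ Y} {g : Y ⟶ Z} (h : S.conf f g) : Mono f :=
  ⟨fun _ _ huv => Fork.IsLimit.hom_ext (S.conf_isKernel h).some (by simpa using huv)⟩

/-- Any cokernel of the first map of a conflation again yields a conflation. -/
lemma aux_conf_coker_unique {X Y Z Z' : E} {f : X ⟶ Y} {g : Y ⟶ Z} (h : S.conf f g)
    {g' : Y ⟶ Z'} (w : f ≫ g' = 0) (hc : IsColimit (CokernelCofork.ofπ g' w)) :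
    S.conf f g' := by
  obtain ⟨h1⟩ := S.conf_isCokernel h
  have key := IsColimit.comp_coconePointUniqueUpToIso_hom h1 hc WalkingParallelPair.one
  exact S.conf_iso (Iso.refl X) (Iso.refl Y) (h1.coconePointUniqueUpToIso hc) h (by simp)
    (by simpa using key)

/-- Conflations are stable under replacing the middle object by an isomorphic one. -/
lemma aux_conf_iso_mid {X Y Y' Z : E} {f : X ⟶ Y} {g : Y ⟶ Z} (h : S.conf f g) (e : Y ≅ Y') :
    S.conf (f ≫ e.hom) (e.inv ≫ g) :=
  S.conf_iso (Iso.refl X) e (Iso.refl Z) h (by simp) (by simp)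

/-- Filtrations transfer along isomorphisms. -/
lemma aux_filtLenP_of_iso {𝒮 : Set E} {n : ℕ} {X X' : E}
    (h : FiltLenP S.conf 𝒮 n X) (e : X ≅ X') : FiltLenP S.conf 𝒮 n X' := by
  cases h with
  | zero X hX => exact FiltLenP.zero X' (hX.of_iso e.symm)
  | step n f g hX hc hconf =>
      exact FiltLenP.step n (f ≫ e.hom) (e.inv ≫ g) hX hc (aux_conf_iso_mid hconf e)

/-- `Filt` is closed under isomorphisms. -/
lemma aux_filt_of_iso {𝒮 : Set E} {X X' : E} (h : X ∈ S.Filt 𝒮) (e : X ≅ X') :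
    X' ∈ S.Filt 𝒮 := by
  obtain ⟨n, hn⟩ := h
  exact ⟨n, aux_filtLenP_of_iso hn e⟩

/-- The split sequence `B ⟶ A ⊞ B ⟶ A` is a conflation. -/
lemma aux_conf_inr_fst (S : ExactStruct E) [HasZeroObject E] [HasBinaryBiproducts E] (A B : E) :
    S.conf (biprod.inr : B ⟶ A ⊞ B) (biprod.fst : A ⊞ B ⟶ A) := by
  obtain ⟨P, inl₅, inr₅, hpo, V, w₅, hw₅⟩ := S.infl_pushout (0 : (0 : E) ⟶ A) (0 : (0 : E) ⟶ B)
      ⟨A, 𝟙 A, S.conf_id_right _ _ (isZero_zero E)⟩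
  have hcomm : (0 : (0 : E) ⟶ A) ≫ biprod.inl = (0 : (0 : E) ⟶ B) ≫ biprod.inr := by simp
  have h1 : inl₅ ≫ hpo.desc biprod.inl biprod.inr hcomm = biprod.inl := hpo.inl_desc _ _ _
  have h2 : inr₅ ≫ hpo.desc biprod.inl biprod.inr hcomm = biprod.inr := hpo.inr_desc _ _ _
  have huv : hpo.desc biprod.inl biprod.inr hcomm ≫ biprod.desc inl₅ inr₅ = 𝟙 P := by
    apply hpo.hom_ext
    · rw [← Category.assoc, h1, Category.comp_id]; simp
    · rw [← Category.assoc, h2, Category.comp_id]; simp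
  have hvu : biprod.desc inl₅ inr₅ ≫ hpo.desc biprod.inl biprod.inr hcomm = 𝟙 (A ⊞ B) := by
    apply biprod.hom_ext' <;> simp [h1, h2]
  have hconf : S.conf (biprod.inr : B ⟶ A ⊞ B)
      ((⟨hpo.desc biprod.inl biprod.inr hcomm, biprod.desc inl₅ inr₅, huv, hvu⟩ :
        P ≅ A ⊞ B).inv ≫ w₅) := by
    refine S.conf_iso (Iso.refl B)
      (⟨hpo.desc biprod.inl biprod.inr hcomm, biprod.desc inl₅ inr₅, huv, hvu⟩ : P ≅ A ⊞ B)
      (Iso.refl V) hw₅ ?_ ?_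
    · dsimp only
      rw [Iso.refl_hom, Category.id_comp]; exact h2
    · dsimp only
      rw [Iso.refl_hom, Category.comp_id, ← Category.assoc, huv, Category.id_comp]
  refine aux_conf_coker_unique hconf (by simp) ?_
  refine CokernelCofork.IsColimit.ofπ _ _ (fun g' w => biprod.inl ≫ g') (fun g' w => ?_)
    (fun g' w m hm => ?_)
  · apply biprod.hom_ext' <;> simp [w]
  · have h3 := congrArg (fun t => biprod.inl ≫ t) hm
    simpa using h3

/-- The Noether lemma: given conflations `(i, c)`, `(k, r)` and `(i ≫ k, d)`,
the induced maps between the quotients form a conflation. -/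
lemma aux_noether {A B D F G T : E} {i : A ⟶ B} {c : B ⟶ F} {k : B ⟶ D} {r : D ⟶ T}
    {d : D ⟶ G} (hic : S.conf i c) (hkr : S.conf k r) (hd : S.conf (i ≫ k) d)
    {φ : F ⟶ G} (hφ : c ≫ φ = k ≫ d) {γ : G ⟶ T} (hγ : d ≫ γ = r) :
    S.conf φ γ := by
  have epic : Epi c := aux_conf_epi hic
  have epid : Epi d := aux_conf_epi hd
  obtain ⟨P, inl₄, inr₄, hpo, V, w₄, hw₄⟩ := S.infl_pushout k c ⟨_, r, hkr⟩
  obtain ⟨hdcolim⟩ := S.conf_isCokernel hd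
  have hu1 : inl₄ ≫ hpo.desc d φ hφ.symm = d := hpo.inl_desc _ _ _
  have hu2 : inr₄ ≫ hpo.desc d φ hφ.symm = φ := hpo.inr_desc _ _ _
  have hzero : (i ≫ k) ≫ inl₄ = 0 := by
    rw [Category.assoc, hpo.w, ← Category.assoc, S.conf_comp hic, zero_comp]
  obtain ⟨h', hh'⟩ := CokernelCofork.IsColimit.desc' hdcolim inl₄ hzero
  have hh'' : d ≫ h' = inl₄ := by simpa using hh'
  have h'u : h' ≫ hpo.desc d φ hφ.symm = 𝟙 G := by
    rw [← cancel_epi d, ← Category.assoc, hh'', hu1, Category.comp_id]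
  have uh' : hpo.desc d φ hφ.symm ≫ h' = 𝟙 P := by
    apply hpo.hom_ext
    · rw [← Category.assoc, hu1, hh'', Category.comp_id]
    · rw [← Category.assoc, hu2, Category.comp_id, ← cancel_epi c, ← Category.assoc, hφ,
        Category.assoc, hh'', hpo.w]
  have hconfφ : S.conf φ
      ((⟨hpo.desc d φ hφ.symm, h', uh', h'u⟩ : P ≅ G).inv ≫ w₄) := by
    refine S.conf_iso (Iso.refl F) (⟨hpo.desc d φ hφ.symm, h', uh', h'u⟩ : P ≅ G)
      (Iso.refl V) hw₄ ?_ ?_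
    · dsimp only
      rw [Iso.refl_hom, Category.id_comp]; exact hu2
    · dsimp only
      rw [Iso.refl_hom, Category.comp_id, ← Category.assoc, uh', Category.id_comp]
  have hφγ : φ ≫ γ = 0 := by
    rw [← cancel_epi c, ← Category.assoc, hφ, Category.assoc, hγ, S.conf_comp hkr, comp_zero]
  refine aux_conf_coker_unique hconfφ hφγ ?_
  have hrcolim := (S.conf_isCokernel hkr).some
  haveI : Epi γ := by
    have h : Epi (d ≫ γ) := by rw [hγ]; exact aux_conf_epi hkr
    exact epi_of_epi d γ
  refine CokernelCofork.IsColimit.ofπ' γ hφγ (fun {W} h w => ?_)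
  have hkdh : k ≫ (d ≫ h) = 0 := by
    rw [← Category.assoc, ← hφ, Category.assoc, w, comp_zero]
  obtain ⟨y, hy⟩ := CokernelCofork.IsColimit.desc' hrcolim (d ≫ h) hkdh
  have hy' : r ≫ y = d ≫ h := by simpa using hy
  refine ⟨y, ?_⟩
  rw [← cancel_epi d, ← Category.assoc, hγ, hy']

/-- Core inductive lemma: if `s` is a member of the semibrick `𝒮` and `ι : s ⟶ Q`
is a morphism into an object of `Filt 𝒮` which becomes an inflation after composing
with some inflation out of `Q`, then `ι` is itself an inflation whose cokernel lies
in `Filt 𝒮`. -/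
lemma aux_filt_core [HasZeroObject E] [HasBinaryBiproducts E]
    {𝒮 : Set E} (h𝒮 : Semibrick 𝒮) {m : ℕ} {Q : E} (h : FiltLenP S.conf 𝒮 m Q) :
    ∀ s ∈ 𝒮, ∀ (ι : s ⟶ Q), (∃ (R : E) (j : Q ⟶ R), S.Inflation j ∧ S.Inflation (ι ≫ j)) →
      ∃ (C : E) (π : Q ⟶ C), S.conf ι π ∧ C ∈ S.Filt 𝒮 := by
  induction h with
  | zero X hX =>
      rintro s hs ι ⟨R, j, hj, Z0, g0, hg0⟩
      exfalso
      haveI : Mono (ι ≫ j) := aux_conf_mono hg0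
      have hι0 : ι ≫ j = 0 := by
        have hι : ι = 0 := hX.eq_of_tgt ι 0
        rw [hι, zero_comp]
      have hid : 𝟙 s = 0 := by
        rw [← cancel_mono (ι ≫ j), hι0, Category.id_comp, zero_comp]
      exact (h𝒮.1 s hs).1 hid
  | @step Q₂ Q₁ t₁ n j₂ p₁ hQ₂ ht₁ hconf IH =>
      rintro s hs ι₁ ⟨R, j₁, hj₁, hιj₁⟩
      by_cases hw : ι₁ ≫ p₁ = 0
      · -- the composite `s ⟶ Q₁ ⟶ t₁` vanishes: `ι₁` factors through `Q₂`.
        obtain ⟨hker⟩ := S.conf_isKernel hconf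
        obtain ⟨ι₂, hι₂⟩ := KernelFork.IsLimit.lift' hker ι₁ hw
        have hfac : ι₂ ≫ j₂ = ι₁ := by simpa using hι₂
        have hj₂ : S.Inflation j₂ := ⟨_, p₁, hconf⟩
        have hj₂j₁ : S.Inflation (j₂ ≫ j₁) := S.infl_comp hj₂ hj₁
        have hι₂c : S.Inflation (ι₂ ≫ (j₂ ≫ j₁)) := by
          rw [← Category.assoc, hfac]; exact hιj₁
        obtain ⟨C₂, π₂, hconf₂, hC₂⟩ := IH s hs ι₂ ⟨R, j₂ ≫ j₁, hj₂j₁, hι₂c⟩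
        obtain ⟨C₁, π₁, hconf₁⟩ := S.infl_comp ⟨_, π₂, hconf₂⟩ hj₂
        obtain ⟨hπ₂colim⟩ := S.conf_isCokernel hconf₂
        obtain ⟨hπ₁colim⟩ := S.conf_isCokernel hconf₁
        have hz1 : ι₂ ≫ (j₂ ≫ π₁) = 0 := by
          rw [← Category.assoc]; exact S.conf_comp hconf₁
        obtain ⟨φ, hφ⟩ := CokernelCofork.IsColimit.desc' hπ₂colim (j₂ ≫ π₁) hz1
        have hφ' : π₂ ≫ φ = j₂ ≫ π₁ := by simpa using hφ
        have hz2 : (ι₂ ≫ j₂) ≫ p₁ = 0 := by rw [hfac]; exact hw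
        obtain ⟨γ, hγ⟩ := CokernelCofork.IsColimit.desc' hπ₁colim p₁ hz2
        have hγ' : π₁ ≫ γ = p₁ := by simpa using hγ
        have hn : S.conf φ γ := aux_noether hconf₂ hconf hconf₁ hφ' hγ'
        obtain ⟨nn, hnn⟩ := hC₂
        exact ⟨C₁, π₁, by rwa [hfac] at hconf₁, nn + 1, FiltLenP.step nn φ γ hnn ht₁ hn⟩
      · -- the composite `w := ι₁ ≫ p₁ : s ⟶ t₁` is nonzero, hence an isomorphism.
        have hne : Nonempty (s ≅ t₁) := by
          by_contra hne
          exact hw (h𝒮.2 s hs t₁ ht₁ (not_nonempty_iff.mp hne) (ι₁ ≫ p₁))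
        obtain ⟨e⟩ := hne
        have hwe : (ι₁ ≫ p₁) ≫ e.inv ≠ 0 := by
          intro h0
          apply hw
          rw [← Category.comp_id (ι₁ ≫ p₁), ← e.inv_hom_id, ← Category.assoc, h0, zero_comp]
        haveI hiso1 : IsIso ((ι₁ ≫ p₁) ≫ e.inv) := (h𝒮.1 s hs).2 _ hwe
        haveI hiso : IsIso (ι₁ ≫ p₁) := by
          rw [show ι₁ ≫ p₁ = ((ι₁ ≫ p₁) ≫ e.inv) ≫ e.hom by simp]
          infer_instance
        haveI : Mono j₂ := aux_conf_mono hconf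
        obtain ⟨hker⟩ := S.conf_isKernel hconf
        set σ : t₁ ⟶ Q₁ := inv (ι₁ ≫ p₁) ≫ ι₁ with hσdef
        have hσ : σ ≫ p₁ = 𝟙 t₁ := by rw [hσdef, Category.assoc, IsIso.inv_hom_id]
        have hθ : (𝟙 Q₁ - p₁ ≫ σ) ≫ p₁ = 0 := by
          rw [Preadditive.sub_comp, Category.id_comp, Category.assoc, hσ, Category.comp_id,
            sub_self]
        obtain ⟨ρ, hρ⟩ := KernelFork.IsLimit.lift' hker (𝟙 Q₁ - p₁ ≫ σ) hθ
        have hρ' : ρ ≫ j₂ = 𝟙 Q₁ - p₁ ≫ σ := by simpa using hρ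
        have hjp : j₂ ≫ p₁ = 0 := S.conf_comp hconf
        have hjρ : j₂ ≫ ρ = 𝟙 Q₂ := by
          rw [← cancel_mono j₂, Category.assoc, hρ', Preadditive.comp_sub, Category.comp_id,
            Category.id_comp, ← Category.assoc, hjp, zero_comp, sub_zero]
        have hσρ : σ ≫ ρ = 0 := by
          rw [← cancel_mono j₂, Category.assoc, hρ', Preadditive.comp_sub, Category.comp_id,
            ← Category.assoc, hσ, Category.id_comp, sub_self, zero_comp]
        have hιρ : ι₁ ≫ ρ = 0 := by
          rw [← cancel_mono j₂, Category.assoc, hρ', Preadditive.comp_sub, Category.comp_id,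
            zero_comp, ← Category.assoc, hσdef, ← Category.assoc, IsIso.hom_inv_id,
            Category.id_comp, sub_self]
        have hhom_inv : biprod.lift ρ p₁ ≫ biprod.desc j₂ σ = 𝟙 Q₁ := by
          rw [biprod.lift_desc, hρ']; abel
        have hinv_hom : biprod.desc j₂ σ ≫ biprod.lift ρ p₁ = 𝟙 (Q₂ ⊞ t₁) := by
          apply biprod.hom_ext' <;> apply biprod.hom_ext <;>
            simp [hjρ, hσρ, hσ, hjp]
        set Φ : Q₂ ⊞ t₁ ≅ Q₁ := ⟨biprod.desc j₂ σ, biprod.lift ρ p₁, hinv_hom, hhom_inv⟩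
          with hΦ
        have hcond : (biprod.inr : t₁ ⟶ Q₂ ⊞ t₁) ≫ Φ.hom = (asIso (ι₁ ≫ p₁)).symm.hom ≫ ι₁ := by
          simp [hΦ, hσdef]
        have hconfι : S.conf ι₁ (Φ.inv ≫ biprod.fst) :=
          S.conf_iso (asIso (ι₁ ≫ p₁)).symm Φ (Iso.refl Q₂) (aux_conf_inr_fst S Q₂ t₁)
            hcond (by rw [Iso.refl_hom, Category.comp_id, ← Category.assoc, Φ.hom_inv_id,
              Category.id_comp])
        exact ⟨Q₂, Φ.inv ≫ biprod.fst, hconfι, n, hQ₂⟩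

/-- The quotient of an object of `Filt 𝒮` by a member of the semibrick `𝒮` lies in
`Filt 𝒮`. -/
lemma aux_brick_quot [HasZeroObject E] [HasBinaryBiproducts E]
    {𝒮 : Set E} (h𝒮 : Semibrick 𝒮) {s : E} (hs : s ∈ 𝒮) {Q C : E} {ι : s ⟶ Q} {π : Q ⟶ C}
    (h : S.conf ι π) (hQ : Q ∈ S.Filt 𝒮) : C ∈ S.Filt 𝒮 := by
  obtain ⟨m, hm⟩ := hQ
  have hid : S.Inflation (𝟙 Q) := ⟨_, 0, S.conf_id_left Q 0 (isZero_zero E)⟩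
  have hιid : S.Inflation (ι ≫ 𝟙 Q) := by rw [Category.comp_id]; exact ⟨_, π, h⟩
  obtain ⟨C', π', hconf', hC'⟩ := aux_filt_core h𝒮 hm s hs ι ⟨Q, 𝟙 Q, hid, hιid⟩
  obtain ⟨h1⟩ := S.conf_isCokernel hconf'
  obtain ⟨h2⟩ := S.conf_isCokernel h
  exact aux_filt_of_iso hC' (h1.coconePointUniqueUpToIso h2)

/-- Main induction: quotients of conflations with subobject and middle object in
`Filt 𝒮` lie in `Filt 𝒮`. -/
lemma aux_main [HasZeroObject E] [HasBinaryBiproducts E]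
    {𝒮 : Set E} (h𝒮 : Semibrick 𝒮) {a : ℕ} {X : E} (ha : FiltLenP S.conf 𝒮 a X) :
    ∀ {Y : E}, Y ∈ S.Filt 𝒮 → ∀ (Z : E) (φ : X ⟶ Y) (g : Y ⟶ Z), S.conf φ g →
      Z ∈ S.Filt 𝒮 := by
  induction ha with
  | zero X hX0 =>
      intro Y hY Z φ g hconf
      have hφ0 : φ = 0 := hX0.eq_of_src φ 0
      obtain ⟨hcolim⟩ := S.conf_isCokernel hconf
      obtain ⟨h, hh⟩ := CokernelCofork.IsColimit.desc' hcolim (𝟙 Y)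
        (by rw [hφ0, zero_comp])
      have hh' : g ≫ h = 𝟙 Y := by simpa using hh
      haveI : Epi g := aux_conf_epi hconf
      have hgh : h ≫ g = 𝟙 Z := by
        rw [← cancel_epi g, ← Category.assoc, hh', Category.id_comp, Category.comp_id]
      exact aux_filt_of_iso hY ⟨g, h, hh', hgh⟩
  | @step X' X sX n f gc hX' hsX hconfX IH =>
      intro Y hY Z φ g hconf
      obtain ⟨G, d, hd⟩ := S.infl_comp ⟨_, gc, hconfX⟩ ⟨_, g, hconf⟩
      have hG : G ∈ S.Filt 𝒮 := IH hY G (f ≫ φ) d hd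
      obtain ⟨hgccolim⟩ := S.conf_isCokernel hconfX
      have hz1 : f ≫ (φ ≫ d) = 0 := by rw [← Category.assoc]; exact S.conf_comp hd
      obtain ⟨φ', hφ'⟩ := CokernelCofork.IsColimit.desc' hgccolim (φ ≫ d) hz1
      have hφ'' : gc ≫ φ' = φ ≫ d := by simpa using hφ'
      obtain ⟨hdcolim⟩ := S.conf_isCokernel hd
      have hz2 : (f ≫ φ) ≫ g = 0 := by rw [Category.assoc, S.conf_comp hconf, comp_zero]
      obtain ⟨γ', hγ'⟩ := CokernelCofork.IsColimit.desc' hdcolim g hz2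
      have hγ'' : d ≫ γ' = g := by simpa using hγ'
      have hn : S.conf φ' γ' := aux_noether hconfX hconf hd hφ'' hγ''
      exact aux_brick_quot h𝒮 hsX hn hG

end Auxiliary

/-- If `𝒮` is a semibrick and `φ : X ⟶ Y` is an inflation
with `X, Y ∈ Filt 𝒮`, then its cokernel `Y/X` belongs to `Filt 𝒮`. -/
theorem cokernel_of_inflation_in_filt {E : Type u} [Category.{v} E] [Preadditive E]
    [HasZeroObject E] [HasBinaryBiproducts E] (S : ExactStruct E)
    {𝒮 : Set E} (h𝒮 : Semibrick 𝒮) {X Y : E} (hX : X ∈ S.Filt 𝒮)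
    (hY : Y ∈ S.Filt 𝒮) (φ : X ⟶ Y) (hφ : S.Inflation φ) :
    ∀ (Z : E) (g : Y ⟶ Z), S.conf φ g → Z ∈ S.Filt 𝒮 := by
  intro Z g hconf
  obtain ⟨a, ha⟩ := hX
  exact aux_main h𝒮 ha hY Z φ g hconf
end

section
/- If S is a semibrick in an exact category E, then every morphism φ : X → Y with X, Y ∈ Filt(S) factors as φ = ι ∘ π where π is a deflation in E, ι is an inflation in E, and the intermediate object lies in Filt(S). -/
open CategoryTheory CategoryTheory.Limits

universe v u

/-!
Induct on a `𝒮`-filtration `X₁ ↣ X ↠ Sₖ` of `X`, carrying along that the inflation of the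
factorization has its cokernel in `Filt 𝒮`. Factor `i ≫ φ = π₁ ≫ ι₁` with `ι₁ ↣ Y ↠ C₁`, and let
`g : Sₖ ⟶ C₁` be induced by `φ ≫ c₁`. If `g = 0`, then `φ` factors through `ι₁`, and the factor
`X ⟶ M₁` is the cokernel `X ↠ N` of `K₁ ↣ X₁ ↣ X` followed by a retraction of the inflation
`M₁ ↣ N`, hence a deflation. If `g ≠ 0`, then `g` is an inflation with filtered cokernel, since by
Hom-orthogonality a nonzero map from a brick into a filtered object either factors through the
subobject or splits off the top factor. The pullback `M` of `c₁` along `g` is then an extension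
of `M₁` by `Sₖ`, and `X ⟶ M` is a deflation by the short five lemma.
-/

lemma Semibrick.isIso_of_ne_zero {E : Type u} [Category.{v} E] [HasZeroMorphisms E]
    {𝒮 : Set E} (h𝒮 : Semibrick 𝒮) {S₁ S₂ : E} (h₁ : S₁ ∈ 𝒮) (h₂ : S₂ ∈ 𝒮) {f : S₁ ⟶ S₂}
    (hf : f ≠ 0) : IsIso f := by
  rcases isEmpty_or_nonempty (S₁ ≅ S₂) with he | he
  · exact absurd (h𝒮.2 S₁ h₁ S₂ h₂ he f) hf
  · obtain ⟨e⟩ := he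
    have hfe : f ≫ e.inv ≠ 0 := fun h => hf (by simpa using h =≫ e.hom)
    have := (h𝒮.1 S₁ h₁).2 _ hfe
    exact IsIso.of_isIso_comp_right f e.inv

namespace ExactStruct

section HasZeroMorphisms

variable {E : Type u} [Category.{v} E] [HasZeroMorphisms E] (S : ExactStruct E)

lemma mem_filt_of_conf {𝒮 : Set E} {X Y Q : E} {f : X ⟶ Y} {g : Y ⟶ Q} (hX : X ∈ S.Filt 𝒮)
    (hQ : Q ∈ 𝒮) (h : S.conf f g) : Y ∈ S.Filt 𝒮 :=
  let ⟨n, hn⟩ := hX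
  ⟨n + 1, .step n f g hn hQ h⟩

variable {A B C : E} {f : A ⟶ B} {g : B ⟶ C}

lemma mono_of_conf (h : S.conf f g) : Mono f :=
  mono_of_isLimit_fork (S.conf_isKernel h).some

lemma epi_of_conf (h : S.conf f g) : Epi g :=
  epi_of_isColimit_cofork (S.conf_isCokernel h).some

lemma exists_lift_of_conf (h : S.conf f g) {T : E} (t : T ⟶ B) (ht : t ≫ g = 0) :
    ∃ l : T ⟶ A, l ≫ f = t :=
  ⟨_, (KernelFork.IsLimit.lift' (S.conf_isKernel h).some t ht).2⟩

lemma exists_desc_of_conf (h : S.conf f g) {T : E} (t : B ⟶ T) (ht : f ≫ t = 0) :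
    ∃ l : C ⟶ T, g ≫ l = t :=
  ⟨_, (CokernelCofork.IsColimit.desc' (S.conf_isCokernel h).some t ht).2⟩

lemma conf_comp_iso (h : S.conf f g) {C' : E} (e : C ≅ C') : S.conf f (g ≫ e.hom) :=
  S.conf_iso (Iso.refl A) (Iso.refl B) e h (by simp) (by simp)

lemma conf_of_kernel_s10 (h : S.conf f g) {A' : E} {f' : A' ⟶ B} [Mono f'] (hf' : f' ≫ g = 0)
    {v : A ⟶ A'} (hv : v ≫ f' = f) : S.conf f' g := by
  have := S.mono_of_conf h
  obtain ⟨w, hw⟩ := S.exists_lift_of_conf h f' hf'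
  have hvw : v ≫ w = 𝟙 A := by rw [← cancel_mono f, Category.assoc, hw, hv, Category.id_comp]
  have hwv : w ≫ v = 𝟙 A' := by rw [← cancel_mono f', Category.assoc, hv, hw, Category.id_comp]
  exact S.conf_iso ⟨v, w, hvw, hwv⟩ (Iso.refl B) (Iso.refl C) h (by simp [hv]) (by simp)

lemma conf_of_cokernel_s10 (h : S.conf f g) {C' : E} {g' : B ⟶ C'} [Epi g'] (hg' : f ≫ g' = 0)
    {v : C' ⟶ C} (hv : g' ≫ v = g) : S.conf f g' := by
  have := S.epi_of_conf h
  obtain ⟨w, hw⟩ := S.exists_desc_of_conf h g' hg'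
  have hwv : w ≫ v = 𝟙 C := by rw [← cancel_epi g, ← Category.assoc, hw, hv, Category.comp_id]
  have hvw : v ≫ w = 𝟙 C' := by rw [← cancel_epi g', ← Category.assoc, hv, hw, Category.comp_id]
  exact S.conf_iso (Iso.refl A) (Iso.refl B) ⟨w, v, hwv, hvw⟩ h (by simp) (by simp [hw])

lemma conf_lift_of_isPullback (h : S.conf f g) {P T : E} {p₁ : P ⟶ B} {p₂ : P ⟶ T}
    {t : T ⟶ C} (hP : IsPullback p₁ p₂ g t) :
    S.conf (hP.lift f 0 (by rw [S.conf_comp h, zero_comp])) p₂ := by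
  obtain ⟨P₀, q₁, q₂, hP₀, A₀, f₀, h₀⟩ := S.defl_pullback g t ⟨A, f, h⟩
  set e := hP₀.isoIsPullback _ _ hP
  have h₀' : S.conf (f₀ ≫ e.hom) p₂ :=
    S.conf_iso (Iso.refl _) e (Iso.refl _) h₀ (by simp) (by simp [e])
  have := S.mono_of_conf h
  have := mono_of_mono_fac (hP.lift_fst f 0 (by rw [S.conf_comp h, zero_comp]))
  obtain ⟨v, hv⟩ := S.exists_lift_of_conf h (f₀ ≫ e.hom ≫ p₁)
    (by simp only [e, Category.assoc, IsPullback.isoIsPullback_hom_fst]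
        rw [hP₀.w, reassoc_of% S.conf_comp h₀, zero_comp])
  refine S.conf_of_kernel_s10 h₀' (hP.lift_snd ..) (v := v) (hP.hom_ext ?_ ?_)
  · simp [hv]
  · simp [S.conf_comp h₀']

lemma conf_desc_of_isPushout (h : S.conf f g) {P T : E} {t : A ⟶ T} {inl : B ⟶ P}
    {inr : T ⟶ P} (hP : IsPushout f t inl inr) :
    S.conf inr (hP.desc g 0 (by rw [S.conf_comp h, comp_zero])) := by
  obtain ⟨P₀, j₁, j₂, hP₀, C₀, g₀, h₀⟩ := S.infl_pushout f t ⟨C, g, h⟩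
  set e := hP.isoIsPushout _ _ hP₀
  have h₀' : S.conf inr (e.hom ≫ g₀) :=
    S.conf_iso (Iso.refl _) e.symm (Iso.refl _) h₀ (by simp [e]) (by simp)
  have := S.epi_of_conf h
  have := epi_of_epi_fac (hP.inl_desc g 0 (by rw [S.conf_comp h, comp_zero]))
  obtain ⟨v, hv⟩ := S.exists_desc_of_conf h (inl ≫ e.hom ≫ g₀)
    (by simp [e, reassoc_of% hP₀.w, S.conf_comp h₀])
  refine S.conf_of_cokernel_s10 h₀' (hP.inr_desc ..) (v := v) (hP.hom_ext ?_ ?_)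
  · simp [hv]
  · simp [S.conf_comp h₀']

lemma conf_comp_of_isPullback (h : S.conf f g) {C' Q : E} {i : C' ⟶ C} {s : C ⟶ Q}
    (hi : S.conf i s) {P : E} {p₁ : P ⟶ B} {p₂ : P ⟶ C'} (hP : IsPullback p₁ p₂ g i) :
    S.conf p₁ (g ≫ s) := by
  obtain ⟨_, f₁, h₁⟩ := S.defl_comp ⟨A, f, h⟩ ⟨C', i, hi⟩
  have := S.mono_of_conf hi
  have := hP.mono_fst_of_mono
  obtain ⟨l, hl⟩ := S.exists_lift_of_conf hi (f₁ ≫ g) (by rw [Category.assoc, S.conf_comp h₁])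
  exact S.conf_of_kernel_s10 h₁ (by rw [← Category.assoc, hP.w, Category.assoc, S.conf_comp hi,
    comp_zero]) (hP.lift_fst f₁ l hl.symm)

lemma conf_comp_of_isPushout (h : S.conf f g) {X Q : E} {i : B ⟶ X} {p : X ⟶ Q}
    (hi : S.conf i p) {P : E} {inl : X ⟶ P} {inr : C ⟶ P} (hP : IsPushout i g inl inr) :
    S.conf (f ≫ i) inl := by
  obtain ⟨_, g₁, h₁⟩ := S.infl_comp ⟨C, g, h⟩ ⟨Q, p, hi⟩
  have := S.epi_of_conf h
  have := hP.epi_inl_of_epi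
  obtain ⟨l, hl⟩ := S.exists_desc_of_conf h (i ≫ g₁) (by rw [← Category.assoc, S.conf_comp h₁])
  exact S.conf_of_cokernel_s10 h₁ (by rw [Category.assoc, hP.w, ← Category.assoc, S.conf_comp h,
    zero_comp]) (hP.inl_desc g₁ l hl.symm)

end HasZeroMorphisms

section Preadditive

variable {E : Type u} [Category.{v} E] [Preadditive E] (S : ExactStruct E)
  {M N Q : E} {i : M ⟶ N} {q : N ⟶ Q}

open ZeroObject in
lemma conf_inr_fst_of_isBilimit [HasZeroObject E] {X Y : E} {b : BinaryBicone X Y}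
    (hb : b.IsBilimit) : S.conf b.inr b.fst := by
  have hP := (IsPullback.of_isBilimit hb).flip
  have h := S.conf_lift_of_isPullback (S.conf_id_left Y 0 (isZero_zero E)) hP
  rwa [show hP.lift (𝟙 Y) 0 _ = b.inr from hP.hom_ext (by simp) (by simp)] at h

lemma conf_of_split [HasZeroObject E] (h : S.conf i q) {r : N ⟶ M} {s : Q ⟶ N}
    (hr : i ≫ r = 𝟙 M) (hs : s ≫ q = 𝟙 Q) (hsr : s ≫ r = 0) (htot : r ≫ i + q ≫ s = 𝟙 N) :
    S.conf s r :=
  S.conf_inr_fst_of_isBilimit (b := ⟨N, r, q, i, s, hr, S.conf_comp h, hsr, hs⟩)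
    (isBinaryBilimitOfTotal _ htot)

lemma exists_retraction_of_section (h : S.conf i q) {s : Q ⟶ N} (hs : s ≫ q = 𝟙 Q) :
    ∃ r : N ⟶ M, i ≫ r = 𝟙 M ∧ s ≫ r = 0 ∧ r ≫ i + q ≫ s = 𝟙 N := by
  have := S.mono_of_conf h
  obtain ⟨r, hr⟩ := S.exists_lift_of_conf h (𝟙 N - q ≫ s) (by simp [hs])
  refine ⟨r, ?_, ?_, by rw [hr]; abel⟩
  · rw [← cancel_mono i, Category.assoc, hr]
    simp [reassoc_of% S.conf_comp h]
  · rw [← cancel_mono i, Category.assoc, hr]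
    simp [reassoc_of% hs]

lemma exists_section_of_retraction (h : S.conf i q) {r : N ⟶ M} (hr : i ≫ r = 𝟙 M) :
    ∃ s : Q ⟶ N, s ≫ q = 𝟙 Q ∧ s ≫ r = 0 ∧ r ≫ i + q ≫ s = 𝟙 N := by
  have := S.epi_of_conf h
  obtain ⟨s, hs⟩ := S.exists_desc_of_conf h (𝟙 N - r ≫ i) (by simp [reassoc_of% hr])
  refine ⟨s, ?_, ?_, by rw [hs]; abel⟩
  · rw [← cancel_epi q, ← Category.assoc, hs]
    simp [S.conf_comp h]
  · rw [← cancel_epi q, ← Category.assoc, hs]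
    simp [hr]

lemma conf_of_section [HasZeroObject E] (h : S.conf i q) {s : Q ⟶ N} (hs : s ≫ q = 𝟙 Q) :
    ∃ r : N ⟶ M, S.conf s r :=
  let ⟨r, hr, hsr, htot⟩ := S.exists_retraction_of_section h hs
  ⟨r, S.conf_of_split h hr hs hsr htot⟩

lemma deflation_of_retraction [HasZeroObject E] (h : S.conf i q) {r : N ⟶ M}
    (hr : i ≫ r = 𝟙 M) : S.Deflation r :=
  let ⟨s, hs, hsr, htot⟩ := S.exists_section_of_retraction h hr
  ⟨Q, s, S.conf_of_split h hr hs hsr htot⟩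

/-- With `D = N' ×_Q N`, the pullbacks of the two conflations are
`M ↣ D ↠ N` (split by `σ = (m, 𝟙)`) and `M ↣ D ↠ N'`; the splitting `D ≅ M ⊞ N` exhibits the
second as `(-𝟙, i) : M ↣ M ⊞ N`, whose cokernel `[i, 𝟙]` descends to the inverse of `m`. -/
lemma short_five {N' : E} {i' : M ⟶ N'} {q' : N' ⟶ Q} (h : S.conf i q) (h' : S.conf i' q')
    {m : N ⟶ N'} (hi : i ≫ m = i') (hq : m ≫ q' = q) : IsIso m := by
  obtain ⟨D, q₁, q₂, hD, -⟩ := S.defl_pullback q' q ⟨M, i', h'⟩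
  have ha := S.conf_lift_of_isPullback h' hD
  have hb := S.conf_lift_of_isPullback h hD.flip
  set a := hD.lift i' 0 _
  set b := hD.flip.lift i 0 _
  let σ : N ⟶ D := hD.lift m (𝟙 N) (by rw [hq, Category.id_comp])
  have hσ₁ : σ ≫ q₁ = m := hD.lift_fst ..
  have hσ₂ : σ ≫ q₂ = 𝟙 N := hD.lift_snd ..
  have ha₁ : a ≫ q₁ = i' := hD.lift_fst ..
  have hb₂ : b ≫ q₂ = i := hD.flip.lift_fst ..
  have hb₁ : b ≫ q₁ = 0 := hD.flip.lift_snd ..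
  obtain ⟨χ, -, hσχ, htot⟩ := S.exists_retraction_of_section ha hσ₂
  have := S.mono_of_conf h'
  have := S.epi_of_conf hb
  have hbχ : b ≫ χ = -𝟙 M := by
    have := congrArg (fun x => b ≫ x ≫ q₁) htot
    simp only [Preadditive.add_comp, Preadditive.comp_add, Category.assoc, ha₁, hσ₁,
      reassoc_of% hb₂, hi, Category.id_comp, hb₁] at this
    rw [← cancel_mono i', Category.assoc, Preadditive.neg_comp, Category.id_comp,
      eq_neg_iff_add_eq_zero, this]
  obtain ⟨ψ, hψ⟩ := S.exists_desc_of_conf hb (q₂ + χ ≫ i)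
    (by simp [hb₂, reassoc_of% hbχ])
  refine ⟨ψ, ?_, ?_⟩
  · rw [← hσ₁, Category.assoc, hψ, Preadditive.comp_add, hσ₂, reassoc_of% hσχ, zero_comp,
      add_zero]
  · rw [← cancel_epi q₁, reassoc_of% hψ, Preadditive.add_comp, Category.assoc, hi, ← ha₁,
      ← hσ₁, ← Category.assoc, ← Category.assoc, ← Preadditive.add_comp, add_comm, htot,
      Category.id_comp, Category.comp_id]

end Preadditive

section Filtration

variable {E : Type u} [Category.{v} E] [Preadditive E] [HasZeroObject E] (S : ExactStruct E)
  {𝒮 : Set E}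

/-- If `g` kills the top quotient `Y ↠ Sₖ` it lives on the shorter filtration, and pushing its
cokernel out along `Y₁ ↣ Y` adds `Sₖ` on top; otherwise `g ≫ d` is an isomorphism of bricks and
`g` splits `d`. -/
lemma exists_conf_mem_filt_of_ne_zero (h𝒮 : Semibrick 𝒮) {n : ℕ} {Y : E}
    (hY : FiltLenP S.conf 𝒮 n Y) {B : E} (hB : B ∈ 𝒮) (g : B ⟶ Y) (hg : g ≠ 0) :
    ∃ (C : E) (c : Y ⟶ C), C ∈ S.Filt 𝒮 ∧ S.conf g c := by
  induction hY with
  | zero Y hY => exact absurd (hY.eq_of_tgt g 0) hg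
  | @step Y₁ Y Sₖ m j d hY₁ hSₖ hjd ih =>
    by_cases hgd : g ≫ d = 0
    · obtain ⟨g', rfl⟩ := S.exists_lift_of_conf hjd g hgd
      obtain ⟨C', c', hC', hc'⟩ := ih g' (fun h => hg (by rw [h, zero_comp]))
      obtain ⟨N, inl, inr, hN, -⟩ := S.infl_pushout j c' ⟨_, _, hjd⟩
      exact ⟨N, inl, S.mem_filt_of_conf hC' hSₖ (S.conf_desc_of_isPushout hjd hN),
        S.conf_comp_of_isPushout hc' hjd hN⟩
    · have := h𝒮.isIso_of_ne_zero hB hSₖ hgd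
      obtain ⟨χ, hχ⟩ := S.conf_of_section (s := g) (S.conf_comp_iso hjd (asIso (inv (g ≫ d))))
        (by rw [← Category.assoc, asIso_hom, IsIso.hom_inv_id])
      exact ⟨Y₁, χ, ⟨m, hY₁⟩, hχ⟩

lemma exists_deflation_inflation_mem_filt (h𝒮 : Semibrick 𝒮) {n : ℕ} {X : E}
    (hX : FiltLenP S.conf 𝒮 n X) {Y : E} (hY : Y ∈ S.Filt 𝒮) (φ : X ⟶ Y) :
    ∃ (M : E) (π : X ⟶ M) (ι : M ⟶ Y) (C : E) (c : Y ⟶ C),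
      M ∈ S.Filt 𝒮 ∧ C ∈ S.Filt 𝒮 ∧ S.Deflation π ∧ S.conf ι c ∧ π ≫ ι = φ := by
  induction hX with
  | zero X hX =>
    rw [hX.eq_of_src φ 0]
    exact ⟨X, 𝟙 X, 0, Y, 𝟙 Y, ⟨0, .zero X hX⟩, hY, ⟨X, 0, S.conf_id_right X X hX⟩,
      S.conf_id_right X Y hX, Category.id_comp _⟩
  | @step X₁ X Sₖ n i p hX₁ hSₖ hip ih =>
    obtain ⟨M₁, π₁, ι₁, C₁, c₁, hM₁, ⟨_, hC₁⟩, ⟨K₁, k₁, hk₁⟩, hι₁, hfac⟩ := ih (i ≫ φ)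
    obtain ⟨g, hg⟩ := S.exists_desc_of_conf hip (φ ≫ c₁)
      (by rw [← Category.assoc, ← hfac, Category.assoc, S.conf_comp hι₁, comp_zero])
    obtain ⟨N, π', i', hN, -⟩ := S.infl_pushout i π₁ ⟨_, _, hip⟩
    have hπ' := S.conf_comp_of_isPushout hk₁ hip hN
    have hi' := S.conf_desc_of_isPushout hip hN
    have := S.mono_of_conf hι₁
    by_cases hg0 : g = 0
    · obtain ⟨u, hu⟩ := S.exists_lift_of_conf hι₁ φ (by rw [← hg, hg0, comp_zero])
      have hiu : i ≫ u = π₁ ≫ 𝟙 M₁ := by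
        rw [Category.comp_id, ← cancel_mono ι₁, Category.assoc, hu, hfac]
      refine ⟨M₁, π' ≫ hN.desc u (𝟙 M₁) hiu, ι₁, C₁, c₁, hM₁, ⟨_, hC₁⟩,
        S.defl_comp ⟨_, _, hπ'⟩ (S.deflation_of_retraction hi' (hN.inr_desc ..)), hι₁, ?_⟩
      rw [Category.assoc, hN.inl_desc_assoc, hu]
    · obtain ⟨C₂, c₂, hC₂, hgc⟩ := S.exists_conf_mem_filt_of_ne_zero h𝒮 hC₁ hSₖ g hg0
      obtain ⟨P, ι, p₂, hP, -⟩ := S.defl_pullback c₁ g ⟨_, _, hι₁⟩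
      have hM := S.conf_lift_of_isPullback hι₁ hP
      set w := hP.lift φ p hg.symm
      have hiw : i ≫ w = π₁ ≫ hP.lift ι₁ 0 (by rw [S.conf_comp hι₁, zero_comp]) :=
        hP.hom_ext (by simp [w, hfac]) (by simp [w, S.conf_comp hip])
      have := S.short_five hi' hM (m := hN.desc w _ hiw) (hN.inr_desc ..)
        (hN.hom_ext (by simp [w]) (by simp [S.conf_comp hM]))
      refine ⟨P, w, ι, C₂, c₁ ≫ c₂, S.mem_filt_of_conf hM₁ hSₖ hM, hC₂,
        ⟨K₁, k₁ ≫ i, ?_⟩, S.conf_comp_of_isPullback hι₁ hgc hP, hP.lift_fst ..⟩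
      simpa using S.conf_comp_iso hπ' (asIso (hN.desc w _ hiw))

end Filtration

end ExactStruct

theorem admissible_factorization_in_filt_general {E : Type u} [Category.{v} E] [Preadditive E]
    [HasZeroObject E] (S : ExactStruct E)
    {𝒮 : Set E} (h𝒮 : Semibrick 𝒮) {X Y : E} (hX : X ∈ S.Filt 𝒮)
    (hY : Y ∈ S.Filt 𝒮) (φ : X ⟶ Y) :
    ∃ (M : E) (π : X ⟶ M) (ι : M ⟶ Y),
      M ∈ S.Filt 𝒮 ∧ S.Deflation π ∧ S.Inflation ι ∧ π ≫ ι = φ := by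
  obtain ⟨n, hX⟩ := hX
  obtain ⟨M, π, ι, C, c, hM, -, hπ, hι, hfac⟩ :=
    S.exists_deflation_inflation_mem_filt h𝒮 hX hY φ
  exact ⟨M, π, ι, hM, hπ, ⟨C, c, hι⟩, hfac⟩

/-- If `𝒮` is a semibrick, every morphism `φ : X ⟶ Y` with
`X, Y ∈ Filt 𝒮` factors as a deflation followed by an inflation through an
object of `Filt 𝒮`. -/
theorem admissible_factorization_in_filt {E : Type u} [Category.{v} E] [Preadditive E]
    [HasZeroObject E] [HasBinaryBiproducts E] (S : ExactStruct E)
    {𝒮 : Set E} (h𝒮 : Semibrick 𝒮) {X Y : E} (hX : X ∈ S.Filt 𝒮)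
    (hY : Y ∈ S.Filt 𝒮) (φ : X ⟶ Y) :
    ∃ (M : E) (π : X ⟶ M) (ι : M ⟶ Y),
      M ∈ S.Filt 𝒮 ∧ S.Deflation π ∧ S.Inflation ι ∧ π ≫ ι = φ :=
  admissible_factorization_in_filt_general S h𝒮 hX hY φ
end

section
/- For any semibrick S in an exact category E, the subcategory Filt(S) is a wide subcategory of E: it is extension-closed, is an abelian category, and its inclusion into E is exact. -/
open CategoryTheory CategoryTheory.Limits

universe v u

/-! ### Auxiliary development for Statement 11 -/

namespace FiltWideAux

open CategoryTheory CategoryTheory.Limits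

variable {E : Type u} [Category.{v} E] [Preadditive E] {S : ExactStruct E}

section Basics

variable {X Y Z : E} {f : X ⟶ Y} {g : Y ⟶ Z}

lemma conf_mono (h : S.conf f g) : Mono f := by
  obtain ⟨hK⟩ := S.conf_isKernel h
  constructor
  intro W a b hab
  exact Fork.IsLimit.hom_ext hK (by simpa using hab)

lemma conf_epi (h : S.conf f g) : Epi g := by
  obtain ⟨hC⟩ := S.conf_isCokernel h
  constructor
  intro W a b hab
  exact Cofork.IsColimit.hom_ext hC (by simpa using hab)

lemma conf_lift (h : S.conf f g) {T : E} (t : T ⟶ Y) (ht : t ≫ g = 0) :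
    ∃ u : T ⟶ X, u ≫ f = t := by
  obtain ⟨hK⟩ := S.conf_isKernel h
  obtain ⟨l, hl⟩ := KernelFork.IsLimit.lift' hK t ht
  exact ⟨l, by simpa using hl⟩

lemma conf_desc (h : S.conf f g) {T : E} (t : Y ⟶ T) (ht : f ≫ t = 0) :
    ∃ u : Z ⟶ T, g ≫ u = t := by
  obtain ⟨hC⟩ := S.conf_isCokernel h
  obtain ⟨l, hl⟩ := CokernelCofork.IsColimit.desc' hC t ht
  exact ⟨l, by simpa using hl⟩

lemma conf_of_isKernel (h : S.conf f g) {X' : E} {f' : X' ⟶ Y} (w : f' ≫ g = 0)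
    (H : IsLimit (KernelFork.ofι f' w)) : S.conf f' g := by
  obtain ⟨hK⟩ := S.conf_isKernel h
  refine S.conf_iso (IsLimit.conePointUniqueUpToIso hK H) (Iso.refl Y) (Iso.refl Z) h ?_ (by simp)
  have := IsLimit.conePointUniqueUpToIso_hom_comp hK H WalkingParallelPair.zero
  simpa using this.symm

lemma conf_of_isCokernel (h : S.conf f g) {Z' : E} {g' : Y ⟶ Z'} (w : f ≫ g' = 0)
    (H : IsColimit (CokernelCofork.ofπ g' w)) : S.conf f g' := by
  obtain ⟨hC⟩ := S.conf_isCokernel h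
  refine S.conf_iso (Iso.refl X) (Iso.refl Y) (IsColimit.coconePointUniqueUpToIso hC H) h (by simp) ?_
  have := IsColimit.comp_coconePointUniqueUpToIso_hom hC H WalkingParallelPair.one
  simpa using this

lemma conf_pre (h : S.conf f g) {X' : E} (e : X' ≅ X) : S.conf (e.hom ≫ f) g :=
  S.conf_iso e.symm (Iso.refl _) (Iso.refl _) h (by simp) (by simp)

lemma conf_post (h : S.conf f g) {Z' : E} (e : Z ≅ Z') : S.conf f (g ≫ e.hom) :=
  S.conf_iso (Iso.refl _) (Iso.refl _) e h (by simp) (by simp)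

lemma conf_mid (h : S.conf f g) {Y' : E} (e : Y ≅ Y') : S.conf (f ≫ e.hom) (e.inv ≫ g) :=
  S.conf_iso (Iso.refl _) e (Iso.refl _) h (by simp) (by simp)

lemma isIso_of_conf_zero_right (h : S.conf f g) (hg : g = 0) : IsIso f := by
  have hm : Mono f := conf_mono h
  have w : (𝟙 Y) ≫ g = 0 := by simp [hg]
  have H : IsLimit (KernelFork.ofι (𝟙 Y) w) :=
    KernelFork.IsLimit.ofι _ _ (fun g' _ => g') (fun g' _ => by simp)
      (fun g' _ m hm' => by simpa using hm')
  obtain ⟨hK⟩ := S.conf_isKernel h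
  let e := IsLimit.conePointUniqueUpToIso H hK
  have he : e.hom ≫ f = 𝟙 Y := by
    have := IsLimit.conePointUniqueUpToIso_hom_comp H hK WalkingParallelPair.zero
    simpa [e] using this
  refine ⟨e.hom, ?_, he⟩
  rw [← cancel_mono f]
  simp [Category.assoc, he]

lemma isIso_of_conf_zero_left (h : S.conf f g) (hf : f = 0) : IsIso g := by
  have hepi : Epi g := conf_epi h
  have w : f ≫ (𝟙 Y) = 0 := by simp [hf]
  have H : IsColimit (CokernelCofork.ofπ (𝟙 Y) w) :=
    CokernelCofork.IsColimit.ofπ _ _ (fun g' _ => g') (fun g' _ => by simp)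
      (fun g' _ m hm' => by simpa using hm')
  obtain ⟨hC⟩ := S.conf_isCokernel h
  let e := IsColimit.coconePointUniqueUpToIso H hC
  have he : (𝟙 Y) ≫ e.hom = g := by
    have := IsColimit.comp_coconePointUniqueUpToIso_hom H hC WalkingParallelPair.one
    simpa [e] using this
  simp only [Category.id_comp] at he
  refine ⟨e.inv, ?_, ?_⟩
  · have h2 := e.hom_inv_id
    rw [he] at h2; exact h2
  · have h2 := e.inv_hom_id
    rw [he] at h2; exact h2

end Basics


section Splitting

variable {X P Y : E}

/-- Explicit splitting of a conflation whose deflation admits a section. -/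
lemma splitting {x : X ⟶ P} {p : P ⟶ Y} (h : S.conf x p) (ι : Y ⟶ P) (hι : ι ≫ p = 𝟙 Y) :
    ∃ σ : P ⟶ X, x ≫ σ = 𝟙 X ∧ ι ≫ σ = 0 ∧ σ ≫ x + p ≫ ι = 𝟙 P := by
  haveI hm : Mono x := conf_mono h
  have hxp : x ≫ p = 0 := S.conf_comp h
  have hρ : (𝟙 P - p ≫ ι) ≫ p = 0 := by
    simp [Preadditive.sub_comp, Category.assoc, hι]
  obtain ⟨σ, hσ⟩ := conf_lift h (𝟙 P - p ≫ ι) hρ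
  refine ⟨σ, ?_, ?_, ?_⟩
  · rw [← cancel_mono x]
    rw [Category.assoc, hσ]
    simp [Preadditive.comp_sub, ← Category.assoc, hxp]
  · rw [← cancel_mono x]
    rw [Category.assoc, hσ]
    simp [Preadditive.comp_sub, ← Category.assoc, hι]
  · rw [hσ]; abel

lemma cosplitting {x : X ⟶ P} {p : P ⟶ Y} (h : S.conf x p) (r : P ⟶ X) (hr : x ≫ r = 𝟙 X) :
    ∃ τ : Y ⟶ P, p ≫ τ = 𝟙 P - r ≫ x ∧ τ ≫ p = 𝟙 Y ∧ τ ≫ r = 0 ∧ r ≫ x + p ≫ τ = 𝟙 P := by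
  haveI he : Epi p := conf_epi h
  have hxp : x ≫ p = 0 := S.conf_comp h
  have hρ : x ≫ (𝟙 P - r ≫ x) = 0 := by
    simp [Preadditive.comp_sub, ← Category.assoc, hr]
  obtain ⟨τ, hτ⟩ := conf_desc h (𝟙 P - r ≫ x) hρ
  refine ⟨τ, hτ, ?_, ?_, ?_⟩
  · rw [← cancel_epi p]
    rw [← Category.assoc, hτ]
    simp [Preadditive.sub_comp, Category.assoc, hxp]
  · rw [← cancel_epi p]
    rw [← Category.assoc, hτ]
    simp [Preadditive.sub_comp, Category.assoc, hr]
  · rw [hτ]; abel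

end Splitting

section PullPush

/-- Pulling back a conflation `X ↣ Y ↠ Z` along an admissible subobject `Z' ↣ Z ↠ c`
gives conflations `X ↣ K ↠ Z'` and `K ↣ Y ↠ c`. -/
lemma conf_pullback {X Y Z Z' c : E} {f : X ⟶ Y} {g : Y ⟶ Z} {m : Z' ⟶ Z} {e : Z ⟶ c}
    (hfg : S.conf f g) (hme : S.conf m e) :
    ∃ (K : E) (u : X ⟶ K) (k : K ⟶ Y) (v : K ⟶ Z'),
      S.conf u v ∧ S.conf k (g ≫ e) ∧ u ≫ k = f ∧ v ≫ m = k ≫ g := by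
  obtain ⟨K, k, hk⟩ := S.defl_comp ⟨X, f, hfg⟩ ⟨Z', m, hme⟩
  haveI hmono_m : Mono m := conf_mono hme
  haveI hmono_k : Mono k := conf_mono hk
  have hkge : k ≫ g ≫ e = 0 := by simpa using S.conf_comp hk
  obtain ⟨v, hv⟩ := conf_lift hme (k ≫ g) (by rw [Category.assoc]; exact hkge)
  obtain ⟨u, hu⟩ := conf_lift hk f (by rw [← Category.assoc, S.conf_comp hfg, zero_comp])
  have huv : u ≫ v = 0 := by
    rw [← cancel_mono m, Category.assoc, hv, ← Category.assoc, hu, S.conf_comp hfg, zero_comp]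
  have hsq : k ≫ g = v ≫ m := hv.symm
  have hPB : IsPullback k v g m := by
    refine IsPullback.of_isLimit (PullbackCone.isLimitAux' (PullbackCone.mk k v hsq)
      (fun s => ?_))
    have hcond : s.fst ≫ g ≫ e = 0 := by
      rw [← Category.assoc, s.condition, Category.assoc, S.conf_comp hme, comp_zero]
    have hl : (conf_lift hk s.fst hcond).choose ≫ k = s.fst :=
      (conf_lift hk s.fst hcond).choose_spec
    have hl2 : (conf_lift hk s.fst hcond).choose ≫ v = s.snd := by
      rw [← cancel_mono m, Category.assoc, hv, ← Category.assoc, hl, s.condition]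
    refine ⟨(conf_lift hk s.fst hcond).choose, hl, hl2,
      fun {m'} hm1 _ => ?_⟩
    simp only [PullbackCone.mk_fst] at hm1
    exact (cancel_mono k).1 (hm1.trans hl.symm)
  obtain ⟨P, p1, p2, hP, X₁, f₁, hf₁⟩ := S.defl_pullback g m ⟨X, f, hfg⟩
  have hδ2 : (hP.isoIsPullback _ _ hPB).hom ≫ v = p2 := by simp
  have hconf_v : S.conf (f₁ ≫ (hP.isoIsPullback _ _ hPB).hom) v :=
    S.conf_iso (Iso.refl X₁) (hP.isoIsPullback _ _ hPB) (Iso.refl Z') hf₁ (by simp) (by simp [hδ2])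
  haveI hmono_uk : Mono (u ≫ k) := by rw [hu]; exact conf_mono hfg
  haveI hmono_u : Mono u := mono_of_mono u k
  have hker : IsLimit (KernelFork.ofι u huv) := by
    refine KernelFork.IsLimit.ofι' u huv (fun {T} t ht => ?_)
    have h1 : (t ≫ k) ≫ g = 0 := by
      rw [Category.assoc, hsq, ← Category.assoc, ht, zero_comp]
    refine ⟨(conf_lift hfg (t ≫ k) h1).choose, ?_⟩
    rw [← cancel_mono k, Category.assoc, hu, (conf_lift hfg (t ≫ k) h1).choose_spec]
  exact ⟨K, u, k, v, conf_of_isKernel hconf_v huv hker, hk, hu, hv⟩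

/-- Pushing out a conflation `X ↣ Y ↠ C` along an arbitrary morphism `t : X ⟶ I`. -/
lemma conf_pushout {X Y C I : E} {f : X ⟶ Y} {c : Y ⟶ C} (hfc : S.conf f c) (t : X ⟶ I) :
    ∃ (Q : E) (inl : Y ⟶ Q) (inr : I ⟶ Q) (c₂ : Q ⟶ C),
      IsPushout f t inl inr ∧ S.conf inr c₂ ∧ inl ≫ c₂ = c := by
  obtain ⟨Q, inl, inr, hPO, G, g₀, hg₀⟩ := S.infl_pushout f t ⟨C, c, hfc⟩
  haveI hepi_c : Epi c := conf_epi hfc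
  have hw : f ≫ c = t ≫ (0 : I ⟶ C) := by rw [S.conf_comp hfc, comp_zero]
  obtain ⟨c₂, h1, h2⟩ : ∃ c₂ : Q ⟶ C, inl ≫ c₂ = c ∧ inr ≫ c₂ = 0 :=
    ⟨hPO.desc c 0 hw, hPO.inl_desc _ _ _, hPO.inr_desc _ _ _⟩
  haveI hepi_c₂ : Epi c₂ := by
    constructor
    intro W a b hab
    rw [← cancel_epi c, ← h1, Category.assoc, Category.assoc, hab]
  have hcolim : IsColimit (CokernelCofork.ofπ c₂ h2) := by
    refine CokernelCofork.IsColimit.ofπ' c₂ h2 (fun {A} k hk => ?_)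
    have h3 : f ≫ inl ≫ k = 0 := by
      rw [← Category.assoc, hPO.w, Category.assoc, hk, comp_zero]
    refine ⟨(conf_desc hfc (inl ≫ k) h3).choose, hPO.hom_ext ?_ ?_⟩
    · rw [← Category.assoc, h1, (conf_desc hfc (inl ≫ k) h3).choose_spec]
    · rw [← Category.assoc, h2, zero_comp, hk]
  exact ⟨Q, inl, inr, c₂, hPO, conf_of_isCokernel hg₀ h2 hcolim, h1⟩

/-- Noether isomorphism: given admissible `X ↣ Y ↣ Z`, the quotients fit in a conflation
`Y/X ↣ Z/X ↠ Z/Y`. -/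
lemma noether {X Y Z Q₁ Q₂ Q₃ : E} {u : X ⟶ Y} {p₁ : Y ⟶ Q₁} {w : Y ⟶ Z} {p₂ : Z ⟶ Q₂}
    {p₃ : Z ⟶ Q₃} (h₁ : S.conf u p₁) (h₂ : S.conf w p₂) (h₃ : S.conf (u ≫ w) p₃) :
    ∃ (j : Q₁ ⟶ Q₃) (h : Q₃ ⟶ Q₂), S.conf j h ∧ p₁ ≫ j = w ≫ p₃ ∧ p₃ ≫ h = p₂ := by
  haveI hepi1 : Epi p₁ := conf_epi h₁
  haveI hepi3 : Epi p₃ := conf_epi h₃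
  obtain ⟨j, hj⟩ := conf_desc h₁ (w ≫ p₃) (by rw [← Category.assoc]; exact S.conf_comp h₃)
  obtain ⟨P, inl, inr, c₂, hPO, hconf, hc₂⟩ := conf_pushout h₂ p₁
  have hsq : w ≫ p₃ = p₁ ≫ j := hj.symm
  have hPO' : IsPushout w p₁ p₃ j := by
    refine IsPushout.of_isColimit (PushoutCocone.isColimitAux' (PushoutCocone.mk p₃ j hsq)
      (fun s => ?_))
    have hcond : (u ≫ w) ≫ s.inl = 0 := by
      rw [Category.assoc, s.condition, ← Category.assoc, S.conf_comp h₁, zero_comp]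
    have hl : p₃ ≫ (conf_desc h₃ s.inl hcond).choose = s.inl :=
      (conf_desc h₃ s.inl hcond).choose_spec
    have hl2 : j ≫ (conf_desc h₃ s.inl hcond).choose = s.inr := by
      rw [← cancel_epi p₁, ← Category.assoc, hj, Category.assoc, hl, s.condition]
    refine ⟨(conf_desc h₃ s.inl hcond).choose, hl, hl2,
      fun {m'} hm1 _ => ?_⟩
    simp only [PushoutCocone.mk_inl] at hm1
    exact (cancel_epi p₃).1 (hm1.trans hl.symm)
  have hδ1 : inr ≫ (hPO.isoIsPushout _ _ hPO').hom = j := by simp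
  have hδ0 : inl ≫ (hPO.isoIsPushout _ _ hPO').hom = p₃ := by simp
  refine ⟨j, (hPO.isoIsPushout _ _ hPO').inv ≫ c₂, ?_, hj, ?_⟩
  · exact S.conf_iso (Iso.refl Q₁) (hPO.isoIsPushout _ _ hPO') (Iso.refl Q₂) hconf
      (by simpa using hδ1) (by simp)
  · have h5 : p₃ ≫ (hPO.isoIsPushout _ _ hPO').inv = inl := by
      rw [Iso.comp_inv_eq]; exact hδ0.symm
    rw [← Category.assoc, h5, hc₂]

end PullPush

section Biprod

variable [HasZeroObject E] [HasBinaryBiproducts E]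

lemma epi_biprod_snd (X Y : E) : Epi (biprod.snd : X ⊞ Y ⟶ Y) := by
  constructor
  intro W a b hab
  rw [← Category.id_comp a, ← Category.id_comp b, ← biprod.inr_snd, Category.assoc,
    Category.assoc, hab]

noncomputable def isColimit_sndCofork (X Y : E) :
    IsColimit (CokernelCofork.ofπ (f := (biprod.inl : X ⟶ X ⊞ Y)) biprod.snd (by simp)) := by
  haveI := epi_biprod_snd (E := E) X Y
  refine CokernelCofork.IsColimit.ofπ' _ _ (fun {A} k hk => ⟨biprod.inr ≫ k, ?_⟩)
  apply biprod.hom_ext' <;> simp [hk]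

lemma conf_inl_snd (X Y : E) : S.conf (biprod.inl : X ⟶ X ⊞ Y) biprod.snd := by
  obtain ⟨z, hz⟩ := HasZeroObject.zero (C := E)
  have h1 : S.conf (0 : z ⟶ Y) (𝟙 Y) := S.conf_id_right z Y hz
  obtain ⟨P, inl', inr', hPO, G, g₀, hg₀⟩ := S.infl_pushout (0 : z ⟶ Y) (0 : z ⟶ X) ⟨Y, 𝟙 Y, h1⟩
  have hcomm : (0 : z ⟶ Y) ≫ (biprod.inr : Y ⟶ X ⊞ Y) = (0 : z ⟶ X) ≫ biprod.inl := by simp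
  have hμ1 : inl' ≫ hPO.desc biprod.inr biprod.inl hcomm = biprod.inr := hPO.inl_desc _ _ _
  have hμ2 : inr' ≫ hPO.desc biprod.inr biprod.inl hcomm = biprod.inl := hPO.inr_desc _ _ _
  have hμν : hPO.desc biprod.inr biprod.inl hcomm ≫ biprod.desc inr' inl' = 𝟙 P := by
    refine hPO.hom_ext ?_ ?_
    · rw [← Category.assoc, hμ1]; simp
    · rw [← Category.assoc, hμ2]; simp
  have hνμ : biprod.desc inr' inl' ≫ hPO.desc biprod.inr biprod.inl hcomm = 𝟙 _ := by
    apply biprod.hom_ext' <;> simp [hμ1, hμ2]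
  have h2 : S.conf (biprod.inl : X ⟶ X ⊞ Y) (biprod.desc inr' inl' ≫ g₀) :=
    S.conf_iso (Iso.refl X) ⟨hPO.desc biprod.inr biprod.inl hcomm, biprod.desc inr' inl', hμν, hνμ⟩
      (Iso.refl G) hg₀ (by simpa using hμ2) (by simp [← Category.assoc, hμν])
  exact conf_of_isCokernel h2 (by simp) (isColimit_sndCofork X Y)

lemma conf_inr_fst (X Y : E) : S.conf (biprod.inr : Y ⟶ X ⊞ Y) biprod.fst := by
  refine S.conf_iso (Iso.refl Y) (biprod.braiding Y X) (Iso.refl X) (conf_inl_snd Y X) ?_ ?_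
  · apply biprod.hom_ext <;> simp
  · apply biprod.hom_ext' <;> simp

/-- A morphism of conflations which is the identity on the outer terms is an isomorphism. -/
lemma isIso_of_conf_conf {X Y Y' Z : E} {f : X ⟶ Y} {g : Y ⟶ Z} {f' : X ⟶ Y'} {g' : Y' ⟶ Z}
    (h : S.conf f g) (h' : S.conf f' g') (β : Y ⟶ Y') (hβf : f ≫ β = f') (hβg : β ≫ g' = g) :
    IsIso β := by
  haveI : Mono f' := conf_mono h'
  obtain ⟨P, p1, p2, hPB, X₀, f₀, hf₀⟩ := S.defl_pullback g' g ⟨X, f', h'⟩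
  obtain ⟨ι, hι1, hι2⟩ : ∃ ι : Y ⟶ P, ι ≫ p1 = β ∧ ι ≫ p2 = 𝟙 Y :=
    ⟨hPB.lift β (𝟙 Y) (by simp [hβg]), hPB.lift_fst _ _ _, hPB.lift_snd _ _ _⟩
  obtain ⟨ξ, hξ1, hξ2⟩ : ∃ ξ : X ⟶ P, ξ ≫ p1 = f' ∧ ξ ≫ p2 = 0 :=
    ⟨hPB.lift f' 0 (by simp [S.conf_comp h']), hPB.lift_fst _ _ _, hPB.lift_snd _ _ _⟩
  obtain ⟨η, hη1, hη2⟩ : ∃ η : X ⟶ P, η ≫ p1 = 0 ∧ η ≫ p2 = f :=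
    ⟨hPB.lift 0 f (by simp [S.conf_comp h]), hPB.lift_fst _ _ _, hPB.lift_snd _ _ _⟩
  haveI : Mono ξ := by
    haveI : Mono (ξ ≫ p1) := by rw [hξ1]; infer_instance
    exact mono_of_mono ξ p1
  have hconfξ : S.conf ξ p2 := by
    refine conf_of_isKernel hf₀ hξ2 (KernelFork.IsLimit.ofι' ξ hξ2 (fun {T} t ht => ?_))
    have h1 : (t ≫ p1) ≫ g' = 0 := by
      rw [Category.assoc, hPB.w, ← Category.assoc, ht, zero_comp]
    refine ⟨(conf_lift h' (t ≫ p1) h1).choose, hPB.hom_ext ?_ ?_⟩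
    · rw [Category.assoc, hξ1, (conf_lift h' (t ≫ p1) h1).choose_spec]
    · rw [Category.assoc, hξ2, comp_zero, ht]
  obtain ⟨P₂, q1, q2, hPB₂, X₂, f₂, hf₂⟩ := S.defl_pullback g g' ⟨X, f, h⟩
  have hPBflip : IsPullback p2 p1 g g' := hPB.flip
  have hδ2 : (hPB₂.isoIsPullback _ _ hPBflip).hom ≫ p1 = q2 := by simp
  have hconf_p1' : S.conf (f₂ ≫ (hPB₂.isoIsPullback _ _ hPBflip).hom) p1 :=
    S.conf_iso (Iso.refl X₂) (hPB₂.isoIsPullback _ _ hPBflip) (Iso.refl Y') hf₂ (by simp)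
      (by simp [hδ2])
  haveI : Mono η := by
    haveI : Mono (η ≫ p2) := by rw [hη2]; exact conf_mono h
    exact mono_of_mono η p2
  have hconfη : S.conf η p1 := by
    refine conf_of_isKernel hconf_p1' hη1 (KernelFork.IsLimit.ofι' η hη1 (fun {T} t ht => ?_))
    have h1 : (t ≫ p2) ≫ g = 0 := by
      rw [Category.assoc, ← hPB.w, ← Category.assoc, ht, zero_comp]
    refine ⟨(conf_lift h (t ≫ p2) h1).choose, hPB.hom_ext ?_ ?_⟩
    · rw [Category.assoc, hη1, comp_zero, ht]
    · rw [Category.assoc, hη2, (conf_lift h (t ≫ p2) h1).choose_spec]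
  obtain ⟨σ, hσ1, hσ2, hσ3⟩ := splitting hconfξ ι hι2
  have hη_dec : η ≫ σ ≫ ξ = η - f ≫ ι := by
    have h6 : η ≫ (σ ≫ ξ + p2 ≫ ι) = η := by rw [hσ3, Category.comp_id]
    rw [Preadditive.comp_add] at h6
    have h7 : η ≫ p2 ≫ ι = f ≫ ι := by rw [← Category.assoc, hη2]
    rw [h7] at h6
    exact (eq_sub_of_add_eq h6)
  have hd : η ≫ σ = -(𝟙 X) := by
    rw [← cancel_mono f']
    have h8 : ((η ≫ σ) ≫ ξ) ≫ p1 = (η ≫ σ) ≫ f' := by rw [Category.assoc, hξ1]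
    rw [← h8, Category.assoc η σ ξ, hη_dec]
    simp [Preadditive.sub_comp, Category.assoc, hη1, hι1, hβf]
  -- the splitting iso `P ≅ X ⊞ Y`
  have hΦΨ : biprod.lift σ p2 ≫ biprod.desc ξ ι = 𝟙 P := by rw [biprod.lift_desc, hσ3]
  have hΨΦ : biprod.desc ξ ι ≫ biprod.lift σ p2 = 𝟙 _ := by
    apply biprod.hom_ext' <;> apply biprod.hom_ext <;>
      simp [hσ1, hσ2, hξ2, hι2]
  have h3 : S.conf (η ≫ biprod.lift σ p2) (biprod.desc ξ ι ≫ p1) :=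
    S.conf_iso (Iso.refl X) ⟨biprod.lift σ p2, biprod.desc ξ ι, hΦΨ, hΨΦ⟩ (Iso.refl Y') hconfη
      (by simp) (by simp [← Category.assoc, hΦΨ])
  have hEq : η ≫ biprod.lift σ p2 = biprod.lift (-(𝟙 X)) f := by
    apply biprod.hom_ext <;> simp [hd, hη2]
  rw [hEq] at h3
  -- the self-inverse automorphism `U`
  have hU : (biprod.desc (biprod.lift (-(𝟙 X)) f) biprod.inr : X ⊞ Y ⟶ X ⊞ Y) ≫
      biprod.desc (biprod.lift (-(𝟙 X)) f) biprod.inr = 𝟙 _ := by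
    apply biprod.hom_ext' <;> apply biprod.hom_ext <;> simp
  have hUinl : biprod.lift (-(𝟙 X)) f ≫ biprod.desc (biprod.lift (-(𝟙 X)) f) biprod.inr =
      (biprod.inl : X ⟶ X ⊞ Y) := by
    apply biprod.hom_ext <;> simp
  have h5 : S.conf (biprod.inl : X ⟶ X ⊞ Y)
      (biprod.desc (biprod.lift (-(𝟙 X)) f) biprod.inr ≫ (biprod.desc ξ ι ≫ p1)) :=
    S.conf_iso (Iso.refl X)
      ⟨biprod.desc (biprod.lift (-(𝟙 X)) f) biprod.inr,
        biprod.desc (biprod.lift (-(𝟙 X)) f) biprod.inr, hU, hU⟩ (Iso.refl Y') h3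
      (by simpa using hUinl) (by simp [← Category.assoc, hU])
  have hUθ : biprod.desc (biprod.lift (-(𝟙 X)) f) biprod.inr ≫ (biprod.desc ξ ι ≫ p1) =
      (biprod.snd : X ⊞ Y ⟶ Y) ≫ β := by
    apply biprod.hom_ext' <;> simp [hξ1, hι1, hβf]
  rw [hUθ] at h5
  obtain ⟨hc⟩ := S.conf_isCokernel h5
  haveI := epi_biprod_snd (E := E) X Y
  have hcomp := IsColimit.comp_coconePointUniqueUpToIso_hom hc (isColimit_sndCofork X Y)
    WalkingParallelPair.one
  simp only [Cofork.app_one_eq_π] at hcomp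
  -- hcomp : (snd ≫ β) ≫ e.hom = snd
  have hβe : β ≫ (IsColimit.coconePointUniqueUpToIso hc (isColimit_sndCofork X Y)).hom = 𝟙 Y := by
    rw [← cancel_epi (biprod.snd : X ⊞ Y ⟶ Y)]
    simpa using hcomp
  haveI : IsIso (β ≫ (IsColimit.coconePointUniqueUpToIso hc (isColimit_sndCofork X Y)).hom) := by
    rw [hβe]; infer_instance
  exact IsIso.of_isIso_comp_right β
    (IsColimit.coconePointUniqueUpToIso hc (isColimit_sndCofork X Y)).hom

end Biprod

section FiltFacts

variable {C : Set E}

lemma filtLenP_iso : ∀ {n : ℕ} {X : E}, FiltLenP S.conf C n X →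
    ∀ {Y : E}, (X ≅ Y) → FiltLenP S.conf C n Y := by
  intro n X h
  induction h with
  | zero X h0 =>
    intro Y e
    exact FiltLenP.zero Y (h0.of_iso e.symm)
  | step n f g hX hc hconf ih =>
    intro Y' e
    exact FiltLenP.step n (f ≫ e.hom) (e.inv ≫ g) hX hc (conf_mid hconf e)

lemma zero_mem_filt {X : E} (hX : IsZero X) : X ∈ S.Filt C :=
  ⟨0, FiltLenP.zero X hX⟩

lemma filt_iso {X Y : E} (h : X ∈ S.Filt C) (e : X ≅ Y) : Y ∈ S.Filt C := by
  obtain ⟨n, hn⟩ := h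
  exact ⟨n, filtLenP_iso hn e⟩

lemma mem_filt_of_mem [HasZeroObject E] {c : E} (hc : c ∈ C) : c ∈ S.Filt C := by
  obtain ⟨z, hz⟩ := HasZeroObject.zero (C := E)
  exact ⟨1, FiltLenP.step 0 (0 : z ⟶ c) (𝟙 c) (FiltLenP.zero z hz) hc (S.conf_id_right z c hz)⟩

lemma filt_ext : ∀ {n : ℕ} {Z : E}, FiltLenP S.conf C n Z → ∀ {X Y : E} {f : X ⟶ Y} {g : Y ⟶ Z},
    S.conf f g → X ∈ S.Filt C → Y ∈ S.Filt C := by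
  intro n Z hZ
  induction hZ with
  | zero Z h0 =>
    intro X Y f g hc hX
    haveI := isIso_of_conf_zero_right hc (h0.eq_of_tgt g 0)
    exact filt_iso hX (asIso f)
  | step n m e hZ' hcC hme ih =>
    intro X Y f g hc hX
    obtain ⟨K, u, k, v, huv, hkge, hu, hv⟩ := conf_pullback hc hme
    obtain ⟨nK, hK⟩ := ih huv hX
    exact ⟨nK + 1, FiltLenP.step nK k _ hK hcC hkge⟩

end FiltFacts

section ClaimD

variable [HasZeroObject E] [HasBinaryBiproducts E] {𝒮 : Set E}

/-- Any nonzero map from an `𝒮`-filtered object to a member of the semibrick `𝒮`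
is a deflation whose kernel is again filtered. -/
lemma defl_of_ne_zero (h𝒮 : Semibrick 𝒮) :
    ∀ {n : ℕ} {A : E}, FiltLenP S.conf 𝒮 n A → ∀ {T : E}, T ∈ 𝒮 → ∀ g : A ⟶ T, g ≠ 0 →
      ∃ (K : E) (k : K ⟶ A), S.conf k g ∧ K ∈ S.Filt 𝒮 := by
  intro n A hA
  induction hA with
  | zero A h0 =>
    intro T hT g hg
    exact absurd (h0.eq_of_src g 0) hg
  | step n i pS hA' hSv hconf ih =>
    intro T hT g hg
    by_cases hig : i ≫ g = 0
    · obtain ⟨χ, hχ⟩ := conf_desc hconf g hig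
      have hχ0 : χ ≠ 0 := fun h0 => hg (by rw [← hχ, h0, comp_zero])
      have hne : ¬ IsEmpty (_ ≅ T) := fun hemp => hχ0 (h𝒮.2 _ hSv T hT hemp χ)
      obtain ⟨ε⟩ := not_isEmpty_iff.mp hne
      haveI hχiso : IsIso χ := by
        have h2 : ε.inv ≫ χ ≠ 0 := fun h0 => hχ0 (by
          rw [← Category.id_comp χ, ← ε.hom_inv_id, Category.assoc, h0, comp_zero])
        haveI := (h𝒮.1 T hT).2 (ε.inv ≫ χ) h2
        have h3 : χ = ε.hom ≫ (ε.inv ≫ χ) := by simp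
        rw [h3]; infer_instance
      have h4 : S.conf i g := by
        have h5 := conf_post hconf (asIso χ)
        rwa [asIso_hom, hχ] at h5
      exact ⟨_, i, h4, ⟨n, hA'⟩⟩
    · obtain ⟨K₀, κ, hκ, hK₀⟩ := ih hT (i ≫ g) hig
      obtain ⟨Q, q, hq⟩ := S.infl_comp ⟨T, i ≫ g, hκ⟩ ⟨_, pS, hconf⟩
      obtain ⟨j, hh, hjh, hj1, hj2⟩ := noether hκ hconf hq
      haveI hepi_ig : Epi (i ≫ g) := conf_epi hκ
      obtain ⟨h₂, hh₂⟩ := conf_desc hq g (by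
        rw [Category.assoc]; exact S.conf_comp hκ)
      have hjh₂ : j ≫ h₂ = 𝟙 T := by
        rw [← cancel_epi (i ≫ g), ← Category.assoc, hj1, Category.assoc, hh₂, Category.comp_id]
      obtain ⟨τ, hτ0, hτ1, hτ2, hτ3⟩ := cosplitting hjh h₂ hjh₂
      have hΨΦ : biprod.desc j τ ≫ biprod.lift h₂ hh = 𝟙 _ := by
        apply biprod.hom_ext' <;> apply biprod.hom_ext <;>
          simp [hjh₂, hτ1, hτ2, S.conf_comp hjh]
      have hΦΨ : biprod.lift h₂ hh ≫ biprod.desc j τ = 𝟙 Q := by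
        rw [biprod.lift_desc, hτ3]
      have hconfτ : S.conf τ h₂ := by
        refine S.conf_iso (Iso.refl _) (⟨biprod.desc j τ, biprod.lift h₂ hh, hΨΦ, hΦΨ⟩ : _ ⊞ _ ≅ Q)
          (Iso.refl T) (conf_inr_fst T _) (by simp) ?_
        apply biprod.hom_ext' <;> simp [hjh₂, hτ2]
      obtain ⟨K, u, k, v, huv, hk, hu, hv⟩ := conf_pullback hq hconfτ
      rw [hh₂] at hk
      obtain ⟨nS, hS⟩ := mem_filt_of_mem (S := S) hSv
      exact ⟨K, k, hk, filt_ext hS huv hK₀⟩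

/-- Every morphism between `𝒮`-filtered objects factors as a deflation followed by an
inflation, with kernel, image and cokernel all `𝒮`-filtered. -/
lemma admissible (h𝒮 : Semibrick 𝒮) :
    ∀ {n : ℕ} {B : E}, FiltLenP S.conf 𝒮 n B → ∀ {A : E}, A ∈ S.Filt 𝒮 → ∀ φ : A ⟶ B,
      ∃ (I K C : E) (p : A ⟶ I) (i : I ⟶ B) (k : K ⟶ A) (c : B ⟶ C),
        φ = p ≫ i ∧ S.conf k p ∧ S.conf i c ∧
        I ∈ S.Filt 𝒮 ∧ K ∈ S.Filt 𝒮 ∧ C ∈ S.Filt 𝒮 := by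
  intro n B hB
  induction hB with
  | zero B h0 =>
    intro A hA φ
    obtain ⟨z, hz⟩ := HasZeroObject.zero (C := E)
    refine ⟨B, A, z, φ, 𝟙 B, 𝟙 A, 0, by simp, ?_, S.conf_id_left B z hz,
      zero_mem_filt h0, hA, zero_mem_filt hz⟩
    rw [h0.eq_of_tgt φ 0]
    exact S.conf_id_left A B h0
  | step n m e hB' hT hme ih =>
    intro A hA φ
    by_cases hψ : φ ≫ e = 0
    · obtain ⟨φ', hφ'⟩ := conf_lift hme φ hψ
      obtain ⟨I, K, C', p, i', k, c', hfact, hkp, hi'c', hI, hK, hC'⟩ := ih hA φ'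
      obtain ⟨C'', c'', hc''⟩ := S.infl_comp ⟨C', c', hi'c'⟩ ⟨_, e, hme⟩
      obtain ⟨j2, h2, hj2h2, _, _⟩ := noether hi'c' hme hc''
      refine ⟨I, K, C'', p, i' ≫ m, k, c'', ?_, hkp, hc'', hI, hK, ?_⟩
      · rw [← hφ', hfact, Category.assoc]
      · obtain ⟨nT, hTlen⟩ := mem_filt_of_mem (S := S) hT
        exact filt_ext hTlen hj2h2 hC'
    · obtain ⟨nA, hAlen⟩ := hA
      obtain ⟨A₀, w, hw, hA₀⟩ := defl_of_ne_zero h𝒮 hAlen hT (φ ≫ e) hψ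
      obtain ⟨φ', hφ'⟩ := conf_lift hme (w ≫ φ) (by
        rw [Category.assoc]; exact S.conf_comp hw)
      obtain ⟨I', K, C', p', i', k', c', hfact, hk'p', hi'c', hI', hK, hC'⟩ := ih hA₀ φ'
      obtain ⟨I, p, hp⟩ := S.infl_comp ⟨I', p', hk'p'⟩ ⟨_, φ ≫ e, hw⟩
      obtain ⟨j, t, hjt, hj1, hj2⟩ := noether hk'p' hw hp
      have hIW : I ∈ S.Filt 𝒮 := by
        obtain ⟨nT, hTlen⟩ := mem_filt_of_mem (S := S) hT
        exact filt_ext hTlen hjt hI'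
      haveI hepi_p' : Epi p' := conf_epi hk'p'
      haveI hepi_p : Epi p := conf_epi hp
      obtain ⟨i, hi⟩ := conf_desc hp φ (by
        have h9 : (k' ≫ w) ≫ φ = (k' ≫ p') ≫ i' ≫ m := by
          rw [Category.assoc, ← hφ', hfact]; simp [Category.assoc]
        rw [h9, S.conf_comp hk'p', zero_comp])
      have hji : j ≫ i = i' ≫ m := by
        have hL : p' ≫ (j ≫ i) = w ≫ φ := by
          rw [← Category.assoc, hj1, Category.assoc, hi]
        have hR : p' ≫ (i' ≫ m) = w ≫ φ := by
          rw [← Category.assoc, ← hfact, hφ']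
        rw [← cancel_epi p', hL, hR]
      have hie : i ≫ e = t := by
        rw [← cancel_epi p, ← Category.assoc, hi, hj2]
      obtain ⟨Q, inlQ, inrQ, c₂, hPO, hinrQ, hc₂⟩ := conf_pushout hi'c' j
      obtain ⟨χ, hχ1, hχ2⟩ : ∃ χ, inlQ ≫ χ = m ∧ inrQ ≫ χ = i :=
        ⟨hPO.desc m i hji.symm, hPO.inl_desc _ _ _, hPO.inr_desc _ _ _⟩
      obtain ⟨Q₂, inlQ₂, inrQ₂, t₂, hPO₂, hinrQ₂, ht₂⟩ := conf_pushout hjt i'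
      have hPO₂' : IsPushout i' j inrQ₂ inlQ₂ := hPO₂.flip
      have hδa : inrQ₂ ≫ (hPO₂'.isoIsPushout _ _ hPO).hom = inlQ := by simp
      have hδb : inlQ₂ ≫ (hPO₂'.isoIsPushout _ _ hPO).hom = inrQ := by simp
      have hQa : inlQ ≫ (hPO₂'.isoIsPushout _ _ hPO).inv = inrQ₂ := by
        rw [Iso.comp_inv_eq]; exact hδa.symm
      have hQb : inrQ ≫ (hPO₂'.isoIsPushout _ _ hPO).inv = inlQ₂ := by
        rw [Iso.comp_inv_eq]; exact hδb.symm
      have hconf_inlQ : S.conf inlQ ((hPO₂'.isoIsPushout _ _ hPO).inv ≫ t₂) :=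
        S.conf_iso (Iso.refl _) (hPO₂'.isoIsPushout _ _ hPO) (Iso.refl _) hinrQ₂
          (by simpa using hδa) (by simp)
      have hχe : χ ≫ e = (hPO₂'.isoIsPushout _ _ hPO).inv ≫ t₂ := by
        refine hPO.hom_ext ?_ ?_
        · rw [← Category.assoc, hχ1, S.conf_comp hme, ← Category.assoc, hQa,
            S.conf_comp hinrQ₂]
        · rw [← Category.assoc, hχ2, hie, ← Category.assoc, hQb, ht₂]
      haveI hχiso : IsIso χ := isIso_of_conf_conf hconf_inlQ hme χ hχ1 hχe
      have hconf_i : S.conf i (inv χ ≫ c₂) := by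
        have h10 := conf_mid hinrQ (asIso χ)
        rw [asIso_hom, hχ2] at h10
        simpa using h10
      exact ⟨I, K, C', p, i, k' ≫ w, inv χ ≫ c₂, hi.symm, hp, hconf_i, hIW, hK, hC'⟩

end ClaimD

section Assembly

variable [HasZeroObject E] [HasBinaryBiproducts E] {𝒮 : Set E}

lemma factorization (h𝒮 : Semibrick 𝒮) {A B : E} (hA : A ∈ S.Filt 𝒮) (hB : B ∈ S.Filt 𝒮)
    (φ : A ⟶ B) :
    ∃ (I K C : E) (p : A ⟶ I) (i : I ⟶ B) (k : K ⟶ A) (c : B ⟶ C),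
      φ = p ≫ i ∧ S.conf k p ∧ S.conf i c ∧
      I ∈ S.Filt 𝒮 ∧ K ∈ S.Filt 𝒮 ∧ C ∈ S.Filt 𝒮 := by
  obtain ⟨n, hn⟩ := hB
  exact admissible h𝒮 hn hA φ

variable (S 𝒮) in
/-- The full subcategory on `Filt 𝒮`. -/
abbrev Wcat := ObjectProperty.FullSubcategory (fun X : E => X ∈ S.Filt 𝒮)

lemma wcat_hasZero : HasZeroObject (Wcat S 𝒮) := by
  obtain ⟨z, hz⟩ := HasZeroObject.zero (C := E)
  exact ⟨⟨z, zero_mem_filt hz⟩,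
    ⟨fun X => ⟨⟨⟨ObjectProperty.homMk 0⟩, fun f => ObjectProperty.hom_ext _ (hz.eq_of_src _ _)⟩⟩,
      fun X => ⟨⟨⟨ObjectProperty.homMk 0⟩, fun f => ObjectProperty.hom_ext _ (hz.eq_of_tgt _ _)⟩⟩⟩⟩

lemma wcat_hasBinaryBiproducts : HasBinaryBiproducts (Wcat S 𝒮) := by
  constructor
  intro A B
  have hmem : (A.obj ⊞ B.obj) ∈ S.Filt 𝒮 := by
    obtain ⟨n, hn⟩ := B.2
    exact filt_ext hn (conf_inl_snd A.obj B.obj) A.2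
  refine HasBinaryBiproduct.mk ⟨?_, ?_⟩
  case refine_1 =>
    exact
      { pt := ⟨A.obj ⊞ B.obj, hmem⟩
        fst := ObjectProperty.homMk (biprod.fst : A.obj ⊞ B.obj ⟶ A.obj)
        snd := ObjectProperty.homMk (biprod.snd : A.obj ⊞ B.obj ⟶ B.obj)
        inl := ObjectProperty.homMk (biprod.inl : A.obj ⟶ A.obj ⊞ B.obj)
        inr := ObjectProperty.homMk (biprod.inr : B.obj ⟶ A.obj ⊞ B.obj)
        inl_fst := ObjectProperty.hom_ext _ biprod.inl_fst
        inl_snd := ObjectProperty.hom_ext _ biprod.inl_snd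
        inr_fst := ObjectProperty.hom_ext _ biprod.inr_fst
        inr_snd := ObjectProperty.hom_ext _ biprod.inr_snd }
  case refine_2 =>
    exact isBinaryBilimitOfTotal _ (ObjectProperty.hom_ext _ biprod.total)

lemma wcat_hasKernels (h𝒮 : Semibrick 𝒮) : HasKernels (Wcat S 𝒮) := by
  constructor
  intro A B φ
  obtain ⟨I, K, C, p, i, k, c, hf, hkp, hic, hI, hK, hC⟩ := factorization h𝒮 A.2 B.2 φ.hom
  haveI hiE : Mono i := conf_mono hic
  haveI hkE : Mono k := conf_mono hkp
  have hkφ : (k ≫ φ.hom : K ⟶ B.obj) = 0 := by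
    rw [hf, ← Category.assoc, S.conf_comp hkp, zero_comp]
  haveI hkW : Mono (ObjectProperty.homMk k : (⟨K, hK⟩ : Wcat S 𝒮) ⟶ A) := by
    constructor
    intro T u v huv
    ext
    exact (cancel_mono k).mp (by simpa using congrArg InducedCategory.Hom.hom huv)
  have hlim : IsLimit (KernelFork.ofι (f := φ) (ObjectProperty.homMk k : (⟨K, hK⟩ : Wcat S 𝒮) ⟶ A)
      (ObjectProperty.hom_ext _ hkφ)) := by
    refine KernelFork.IsLimit.ofι' _ _ (fun {T} t ht => ?_)
    have htE : t.hom ≫ φ.hom = 0 := congrArg InducedCategory.Hom.hom ht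
    have ht1 : ((t.hom ≫ p : T.obj ⟶ I)) ≫ i = 0 := by
      rw [Category.assoc, ← hf]; exact htE
    have htp : (t.hom ≫ p : T.obj ⟶ I) = 0 := by
      rw [← cancel_mono i, ht1, zero_comp]
    have hu := (conf_lift hkp t.hom htp).choose_spec
    exact ⟨ObjectProperty.homMk (conf_lift hkp t.hom htp).choose, ObjectProperty.hom_ext _ hu⟩
  exact HasLimit.mk ⟨_, hlim⟩

lemma wcat_hasCokernels (h𝒮 : Semibrick 𝒮) : HasCokernels (Wcat S 𝒮) := by
  constructor
  intro A B φ
  obtain ⟨I, K, C, p, i, k, c, hf, hkp, hic, hI, hK, hC⟩ := factorization h𝒮 A.2 B.2 φ.hom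
  haveI hpE : Epi p := conf_epi hkp
  haveI hcE : Epi c := conf_epi hic
  have hφc : (φ.hom ≫ c : A.obj ⟶ C) = 0 := by
    rw [hf, Category.assoc, S.conf_comp hic, comp_zero]
  haveI hcW : Epi (ObjectProperty.homMk c : B ⟶ (⟨C, hC⟩ : Wcat S 𝒮)) := by
    constructor
    intro T u v huv
    ext
    exact (cancel_epi c).mp (by simpa using congrArg InducedCategory.Hom.hom huv)
  have hcolim : IsColimit (CokernelCofork.ofπ (f := φ)
      (ObjectProperty.homMk c : B ⟶ (⟨C, hC⟩ : Wcat S 𝒮)) (ObjectProperty.hom_ext _ hφc)) := by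
    refine CokernelCofork.IsColimit.ofπ' _ _ (fun {T} t ht => ?_)
    have htE : φ.hom ≫ t.hom = 0 := congrArg InducedCategory.Hom.hom ht
    have ht1 : p ≫ (i ≫ t.hom : I ⟶ T.obj) = 0 := by
      rw [← Category.assoc, ← hf]; exact htE
    have hti : (i ≫ t.hom : I ⟶ T.obj) = 0 := by
      rw [← cancel_epi p, ht1, comp_zero]
    have hu := (conf_desc hic t.hom hti).choose_spec
    exact ⟨ObjectProperty.homMk (conf_desc hic t.hom hti).choose, ObjectProperty.hom_ext _ hu⟩
  exact HasColimit.mk ⟨_, hcolim⟩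

/-- A monomorphism in `Wcat` is a conflation inflation. -/
lemma wcat_conf_of_mono (h𝒮 : Semibrick 𝒮) {A B : Wcat S 𝒮} (φ : A ⟶ B) [Mono φ] :
    ∃ (Cc : Wcat S 𝒮) (c : B ⟶ Cc), S.conf φ.hom c.hom := by
  obtain ⟨I, K, C, p, i, k, c, hf, hkp, hic, hI, hK, hC⟩ := factorization h𝒮 A.2 B.2 φ.hom
  have hkφ : (k ≫ φ.hom : K ⟶ B.obj) = 0 := by
    rw [hf, ← Category.assoc, S.conf_comp hkp, zero_comp]
  have h01 : (ObjectProperty.homMk k : (⟨K, hK⟩ : Wcat S 𝒮) ⟶ A) ≫ φ = 0 ≫ φ :=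
    ObjectProperty.hom_ext _ (hkφ.trans zero_comp.symm)
  have hk0 := (cancel_mono φ).mp h01
  haveI : IsIso p := isIso_of_conf_zero_left hkp (by exact congrArg InducedCategory.Hom.hom hk0)
  have h2 := conf_pre hic (asIso p)
  rw [asIso_hom, ← hf] at h2
  exact ⟨⟨C, hC⟩, ObjectProperty.homMk c, h2⟩

/-- An epimorphism in `Wcat` is a conflation deflation. -/
lemma wcat_conf_of_epi (h𝒮 : Semibrick 𝒮) {A B : Wcat S 𝒮} (φ : A ⟶ B) [Epi φ] :
    ∃ (Kk : Wcat S 𝒮) (k : Kk ⟶ A), S.conf k.hom φ.hom := by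
  obtain ⟨I, K, C, p, i, k, c, hf, hkp, hic, hI, hK, hC⟩ := factorization h𝒮 A.2 B.2 φ.hom
  have hφc : (φ.hom ≫ c : A.obj ⟶ C) = 0 := by
    rw [hf, Category.assoc, S.conf_comp hic, comp_zero]
  have h01 : φ ≫ (ObjectProperty.homMk c : B ⟶ (⟨C, hC⟩ : Wcat S 𝒮)) = φ ≫ 0 :=
    ObjectProperty.hom_ext _ (hφc.trans comp_zero.symm)
  have hc0 := (cancel_epi φ).mp h01
  haveI : IsIso i := isIso_of_conf_zero_right hic (by exact congrArg InducedCategory.Hom.hom hc0)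
  have h2 := conf_post hkp (asIso i)
  rw [asIso_hom, ← hf] at h2
  exact ⟨⟨K, hK⟩, ObjectProperty.homMk k, h2⟩

lemma wcat_normalMono (h𝒮 : Semibrick 𝒮) : IsNormalMonoCategory (Wcat S 𝒮) := by
  constructor
  intro A B φ hφ
  have hex := wcat_conf_of_mono h𝒮 φ
  have hconf := hex.choose_spec.choose_spec
  refine ⟨⟨hex.choose, hex.choose_spec.choose, ObjectProperty.hom_ext _ (S.conf_comp hconf), ?_⟩⟩
  refine KernelFork.IsLimit.ofι' _ _ (fun {T} t ht => ?_)
  have ht' : t.hom ≫ hex.choose_spec.choose.hom = 0 := congrArg InducedCategory.Hom.hom ht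
  have hu := (conf_lift hconf t.hom ht').choose_spec
  exact ⟨ObjectProperty.homMk (conf_lift hconf t.hom ht').choose, ObjectProperty.hom_ext _ hu⟩

lemma wcat_normalEpi (h𝒮 : Semibrick 𝒮) : IsNormalEpiCategory (Wcat S 𝒮) := by
  constructor
  intro A B φ hφ
  have hex := wcat_conf_of_epi h𝒮 φ
  have hconf := hex.choose_spec.choose_spec
  refine ⟨⟨hex.choose, hex.choose_spec.choose, ObjectProperty.hom_ext _ (S.conf_comp hconf), ?_⟩⟩
  refine CokernelCofork.IsColimit.ofπ' _ _ (fun {T} t ht => ?_)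
  have ht' : hex.choose_spec.choose.hom ≫ t.hom = 0 := congrArg InducedCategory.Hom.hom ht
  have hu := (conf_desc hconf t.hom ht').choose_spec
  exact ⟨ObjectProperty.homMk (conf_desc hconf t.hom ht').choose, ObjectProperty.hom_ext _ hu⟩

noncomputable def wcat_abelian (h𝒮 : Semibrick 𝒮) : Abelian (Wcat S 𝒮) := by
  haveI := wcat_hasZero (S := S) (𝒮 := 𝒮)
  haveI := wcat_hasBinaryBiproducts (S := S) (𝒮 := 𝒮)
  haveI : HasBinaryProducts (Wcat S 𝒮) := inferInstance
  haveI : HasTerminal (Wcat S 𝒮) := inferInstance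
  haveI : HasFiniteProducts (Wcat S 𝒮) := hasFiniteProducts_of_has_binary_and_terminal
  haveI := wcat_hasKernels (S := S) h𝒮
  haveI := wcat_hasCokernels (S := S) h𝒮
  exact { toPreadditive := inferInstance
          normalMonoOfMono := (wcat_normalMono (S := S) h𝒮).normalMonoOfMono
          normalEpiOfEpi := (wcat_normalEpi (S := S) h𝒮).normalEpiOfEpi }

end Assembly

end FiltWideAux

/-- For any semibrick `𝒮` in an exact category `E`, the
subcategory `Filt 𝒮` is wide: extension-closed, abelian, and exactly
embedded in `E`. -/
theorem filt_semibrick_isWide {E : Type u} [Category.{v} E] [Preadditive E]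
    [HasZeroObject E] [HasBinaryBiproducts E] (S : ExactStruct E)
    {𝒮 : Set E} (h𝒮 : Semibrick 𝒮) :
    S.IsWide (S.Filt 𝒮) := by
  classical
  constructor
  · intro X Y Z f g hconf hX hZ
    obtain ⟨n, hn⟩ := hZ
    exact FiltWideAux.filt_ext hn hconf hX
  · letI instAb : Abelian (ObjectProperty.FullSubcategory fun X => X ∈ S.Filt 𝒮) :=
      FiltWideAux.wcat_abelian (S := S) h𝒮
    refine ⟨instAb, ?_⟩
    intro A B Cc f g w hSE
    haveI := hSE.mono_f
    haveI := hSE.epi_g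
    obtain ⟨Cc', c, hconf⟩ := FiltWideAux.wcat_conf_of_mono (S := S) h𝒮 f
    haveI hcW : Epi c := by
      constructor
      intro T u v huv
      haveI := FiltWideAux.conf_epi hconf
      ext
      exact (cancel_epi c.hom).mp (by simpa using congrArg InducedCategory.Hom.hom huv)
    have hfc : f ≫ c = 0 := ObjectProperty.hom_ext _ (S.conf_comp hconf)
    have hcolim : IsColimit (CokernelCofork.ofπ (f := f) c hfc) := by
      refine CokernelCofork.IsColimit.ofπ' _ _ (fun {T} t ht => ?_)
      have ht' : f.hom ≫ t.hom = 0 := congrArg InducedCategory.Hom.hom ht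
      have hu := (FiltWideAux.conf_desc hconf t.hom ht').choose_spec
      exact ⟨ObjectProperty.homMk (FiltWideAux.conf_desc hconf t.hom ht').choose,
        ObjectProperty.hom_ext _ hu⟩
    haveI : IsRegularEpiCategory (ObjectProperty.FullSubcategory fun X => X ∈ S.Filt 𝒮) :=
      @regularEpiCategoryOfNormalEpiCategory _ _ _ instAb.toIsNormalEpiCategory
    haveI : Balanced (ObjectProperty.FullSubcategory fun X => X ∈ S.Filt 𝒮) :=
      balanced_of_strongEpiCategory
    have hg := hSE.gIsCokernel
    have hcomp := IsColimit.comp_coconePointUniqueUpToIso_hom hcolim hg WalkingParallelPair.one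
    simp only [Cofork.app_one_eq_π] at hcomp
    have hcompE : c.hom ≫ (IsColimit.coconePointUniqueUpToIso hcolim hg).hom.hom = g.hom :=
      congrArg InducedCategory.Hom.hom hcomp
    have hEE : S.conf f.hom (c.hom ≫ (IsColimit.coconePointUniqueUpToIso hcolim hg).hom.hom) :=
      FiltWideAux.conf_post hconf
        (Iso.mk (IsColimit.coconePointUniqueUpToIso hcolim hg).hom.hom
          (IsColimit.coconePointUniqueUpToIso hcolim hg).inv.hom
          (by exact congrArg InducedCategory.Hom.hom (IsColimit.coconePointUniqueUpToIso hcolim hg).hom_inv_id)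
          (by exact congrArg InducedCategory.Hom.hom (IsColimit.coconePointUniqueUpToIso hcolim hg).inv_hom_id))
    rwa [hcompE] at hEE
end

section
/- For a semibrick S in an exact category E, the simple objects of the abelian category Filt(S) are exactly the objects of S, and Filt(S) is a length abelian category (every object has a finite filtration by simples). -/
open CategoryTheory CategoryTheory.Limits

universe v u

namespace ExactStruct

variable {E : Type u} [Category.{v} E] [HasZeroMorphisms E] (S : ExactStruct E)

lemma Deflation.epi {S : ExactStruct E} {Y Z : E} {g : Y ⟶ Z} (hg : S.Deflation g) : Epi g :=
  let ⟨_, _, h⟩ := hg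
  Cofork.IsColimit.epi (S.conf_isCokernel h).some

lemma isIso_snd_of_isZero_fst {X Y Z : E} {f : X ⟶ Y} {g : Y ⟶ Z} (h : S.conf f g)
    (hX : IsZero X) : IsIso g :=
  CokernelCofork.IsColimit.isIso_π _ (S.conf_isCokernel h).some (hX.eq_of_src _ _)

lemma isZero_fst_of_mono_snd {X Y Z : E} {f : X ⟶ Y} {g : Y ⟶ Z} (h : S.conf f g) [Mono g] :
    IsZero X :=
  KernelFork.IsLimit.isZero_of_mono (S.conf_isKernel h).some

open ZeroObject in
lemma mem_filt_of_iso [HasZeroObject E] {C : Set E} {X s : E} (hs : s ∈ C) (e : X ≅ s) :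
    X ∈ S.Filt C := by
  have hconf : S.conf (0 : (0 : E) ⟶ X) e.hom :=
    S.conf_iso (Iso.refl _) (Iso.refl X) e (S.conf_id_right _ X (isZero_zero E))
      (by simp) (by simp)
  exact ⟨1, .step 0 _ _ (.zero _ (isZero_zero E)) hs hconf⟩

lemma subset_filt [HasZeroObject E] (C : Set E) : C ⊆ S.Filt C :=
  fun _ hc => S.mem_filt_of_iso hc (Iso.refl _)

lemma exists_confIn_filt_of_not_isZero [HasZeroObject E] {C : Set E} {X : E}
    (hX : X ∈ S.Filt C) (hX0 : ¬ IsZero X) :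
    ∃ (Y c : E) (f : Y ⟶ X) (g : X ⟶ c), S.confIn (S.Filt C) f g ∧ c ∈ C := by
  obtain ⟨n, hfilt⟩ := hX
  cases hfilt with
  | zero _ h0 => exact absurd h0 hX0
  | step m f g hY hc hconf =>
    exact ⟨_, _, f, g, ⟨hconf, ⟨m, hY⟩, ⟨m + 1, .step m f g hY hc hconf⟩, S.subset_filt C hc⟩,
      hc⟩

lemma exists_iso_of_simpleIn_filt [HasZeroObject E] {C : Set E} (hC : ∀ c ∈ C, ¬ IsZero c)
    {X : E} (hX : S.SimpleIn (S.Filt C) X) : ∃ c ∈ C, Nonempty (X ≅ c) := by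
  obtain ⟨hXmem, hX0, hsimple⟩ := hX
  obtain ⟨Y, c, f, g, hconf, hc⟩ := S.exists_confIn_filt_of_not_isZero hXmem hX0
  rcases hsimple f g hconf with hY | hc0
  · have := S.isIso_snd_of_isZero_fst hconf.1 hY
    exact ⟨c, hc, ⟨asIso g⟩⟩
  · exact absurd hc0 (hC c hc)

end ExactStruct

lemma FiltLenP.mono {E : Type u} [Category.{v} E]
    {conf : ∀ ⦃X Y Z : E⦄, (X ⟶ Y) → (Y ⟶ Z) → Prop} {C D : Set E} (hCD : C ⊆ D)
    {n : ℕ} {X : E} (h : FiltLenP conf C n X) : FiltLenP conf D n X := by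
  induction h with
  | zero X hX => exact .zero X hX
  | step n f g _ hc hconf ih => exact .step n f g ih (hCD hc) hconf

lemma FiltLenP.confIn_filt {E : Type u} [Category.{v} E] [HasZeroMorphisms E] [HasZeroObject E]
    {S : ExactStruct E} {C : Set E} {n : ℕ} {X : E} (h : FiltLenP S.conf C n X) :
    FiltLenP (S.confIn (S.Filt C)) C n X := by
  induction h with
  | zero X hX => exact .zero X hX
  | step n f g hX hc hconf ih =>
    exact .step n f g ih hc
      ⟨hconf, ⟨n, hX⟩, ⟨n + 1, .step n f g hX hc hconf⟩, S.subset_filt C hc⟩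

section Semibrick

variable {E : Type u} [Category.{v} E] [HasZeroMorphisms E]

lemma Brick.not_isZero {X : E} (hX : Brick X) : ¬ IsZero X :=
  fun h => hX.1 (h.eq_of_src _ _)

lemma Semibrick.isIso_of_ne_zero_s12 {𝒮 : Set E} (h𝒮 : Semibrick 𝒮) {s c : E} (hs : s ∈ 𝒮)
    (hc : c ∈ 𝒮) {d : s ⟶ c} (hd : d ≠ 0) : IsIso d := by
  obtain ⟨i⟩ : Nonempty (s ≅ c) := not_isEmpty_iff.mp fun h => hd (h𝒮.2 s hs c hc h d)
  have hdi : d ≫ i.inv ≠ 0 := fun h => hd (by simpa using h =≫ i.hom)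
  have := (h𝒮.1 s hs).2 _ hdi
  exact IsIso.of_isIso_comp_right d i.inv

/-- A conflation `L ↣ X ↠ N` in `Filt 𝒮` with `N ≠ 0` composes with the last step of the
filtration of `N` to a deflation `X ↠ c`, `c ∈ 𝒮`, which is nonzero and hence an isomorphism:
so `X ↠ N` is monic and `L = 0`. -/
lemma ExactStruct.simpleIn_filt_of_iso [HasZeroObject E] (S : ExactStruct E) {𝒮 : Set E}
    (h𝒮 : Semibrick 𝒮) {X s : E} (hs : s ∈ 𝒮) (e : X ≅ s) : S.SimpleIn (S.Filt 𝒮) X := by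
  refine ⟨S.mem_filt_of_iso hs e, fun h => (h𝒮.1 s hs).not_isZero (h.of_iso e.symm), ?_⟩
  rintro L N f g ⟨hconf, -, -, hN⟩
  by_cases hN0 : IsZero N
  · exact Or.inr hN0
  obtain ⟨_, c, _, g₀, ⟨hconf₀, -⟩, hc⟩ := S.exists_confIn_filt_of_not_isZero hN hN0
  have hdefl : S.Deflation (g ≫ g₀) := S.defl_comp ⟨_, _, hconf⟩ ⟨_, _, hconf₀⟩
  have hd : e.inv ≫ g ≫ g₀ ≠ 0 := fun h => by
    have := hdefl.epi
    exact (h𝒮.1 c hc).not_isZero (IsZero.of_epi_eq_zero _ h)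
  have := h𝒮.isIso_of_ne_zero_s12 hs hc hd
  have := IsIso.of_isIso_comp_left e.inv (g ≫ g₀)
  have : Mono g := mono_of_mono g g₀
  exact Or.inl (S.isZero_fst_of_mono_snd hconf)

end Semibrick

theorem filt_semibrick_simples_and_length_general {E : Type u} [Category.{v} E] [Preadditive E]
    [HasZeroObject E] (S : ExactStruct E)
    {𝒮 : Set E} (h𝒮 : Semibrick 𝒮) :
    (∀ X : E, S.SimpleIn (S.Filt 𝒮) X ↔ ∃ s ∈ 𝒮, Nonempty (X ≅ s)) ∧
      S.IsLengthIn (S.Filt 𝒮) := by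
  have hsimple : ∀ s ∈ 𝒮, S.SimpleIn (S.Filt 𝒮) s :=
    fun s hs => S.simpleIn_filt_of_iso h𝒮 hs (Iso.refl s)
  refine ⟨fun X => ⟨S.exists_iso_of_simpleIn_filt fun s hs => (h𝒮.1 s hs).not_isZero, ?_⟩, ?_⟩
  · rintro ⟨s, hs, ⟨e⟩⟩
    exact S.simpleIn_filt_of_iso h𝒮 hs e
  · rintro X ⟨n, hX⟩
    exact ⟨n, hX.confIn_filt.mono hsimple⟩

/-- For a semibrick `𝒮`, the simple objects of `Filt 𝒮`
(with its induced exact structure, which is the standard abelian one) are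
exactly the objects isomorphic to members of `𝒮`, and `Filt 𝒮` is length:
every object has a finite filtration by its simple objects. -/
theorem filt_semibrick_simples_and_length {E : Type u} [Category.{v} E] [Preadditive E]
    [HasZeroObject E] [HasBinaryBiproducts E] (S : ExactStruct E)
    {𝒮 : Set E} (h𝒮 : Semibrick 𝒮) :
    (∀ X : E, S.SimpleIn (S.Filt 𝒮) X ↔ ∃ s ∈ 𝒮, Nonempty (X ≅ s)) ∧
      S.IsLengthIn (S.Filt 𝒮) :=
  filt_semibrick_simples_and_length_general S h𝒮
end
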